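/- arXiv:1311.5390 — 9 statements merged into one kernel-verified Lean document; each statement's English description precedes it below -/
import Mathlib

section
/- Let p, q ≥ 5 be two distinct primes. Then there is no circulant complex Hadamard matrix of order p+q all of whose entries are pq-th roots of unity. -/
/-!
Send the `pq`-th roots of unity to `ZMod p × ZMod q` by the Chinese remainder theorem, so that the
first row of the matrix is `k ↦ ψ (X k)` for an injective character `ψ`. Orthogonality of rows `0`
and `d ≠ 0` says that the `p + q` roots `ψ (X (k - d) - X k)` sum to zero. The `ℚ`-span of the
`pq`-th roots has dimension `φ(pq) = (p - 1)(q - 1)`, so the rational relations among them form a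
space of dimension `p + q - 1`, spanned by the rows and columns of the `p × q` grid (de Bruijn); a
vanishing sum of exactly `p + q` roots is therefore one full row plus one full column. The
differences `X (k - d) - X k` sum to zero, which for odd `p`, `q` pins this row and column to the
two axes. Hence any two values of `X` share a coordinate, so one coordinate of `X` is constant,
although both axes occur among its differences.
-/

open Complex Matrix

def IsHadamard {n : ℕ} [NeZero n] (H : Matrix (ZMod n) (ZMod n) ℂ) : Prop :=
  (∀ i j, ‖H i j‖ = 1) ∧ H * Hᴴ = (n : ℂ) • 1

open Finset Module Submodule Polynomial

lemma forall_eq_or_forall_eq_of_pairwise {α β γ : Type*} {f : α → β} {g : α → γ}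
    (h : Pairwise fun a b => f a = f b ∨ g a = g b) :
    (∀ a b, f a = f b) ∨ ∀ a b, g a = g b := by
  by_contra! ⟨⟨a, b, hab⟩, ⟨c, e, hce⟩⟩
  have hg : g a = g b := (h (ne_of_apply_ne f hab)).resolve_left hab
  obtain ⟨t, hta⟩ : ∃ t, g t ≠ g a := by
    by_cases hc : g c = g a
    · exact ⟨e, fun he => hce (hc.trans he.symm)⟩
    · exact ⟨c, hc⟩
  have htb : g t ≠ g b := hg ▸ hta
  exact hab (((h (ne_of_apply_ne g hta)).resolve_right hta).symm.trans
    ((h (ne_of_apply_ne g htb)).resolve_right htb))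

lemma AddChar.sum_eq_zero_of_injective {G R : Type*} [AddGroup G] [Fintype G] [Nontrivial G]
    [CommSemiring R] [IsDomain R] [CharZero R] {φ : AddChar G R} (hφ : Function.Injective φ) :
    ∑ x, φ x = 0 := by
  refine AddChar.sum_eq_zero_iff_ne_zero.mpr fun h => ?_
  obtain ⟨x, hx⟩ := exists_ne (0 : G)
  exact hx (hφ (by rw [h, AddChar.zero_apply, AddChar.zero_apply]))

lemma Nat.eq_one_of_mul_add_mul_eq_add {p q s t : ℕ} (hp : p.Prime) (hq : q.Prime)
    (hpq : p ≠ q) (h : q * s + p * t = p + q) : t = 1 := by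
  have hcop : IsCoprime (q : ℤ) p :=
    Nat.isCoprime_iff_coprime.mpr ((Nat.coprime_primes hq hp).mpr hpq.symm)
  have h' : (q : ℤ) * s + p * t = p + q := by exact_mod_cast h
  obtain ⟨m, hm⟩ : (q : ℤ) ∣ t - 1 :=
    hcop.dvd_of_dvd_mul_left ⟨1 - s, by linear_combination h'⟩
  have := hp.two_le
  have := hq.two_le
  rcases lt_trichotomy m 0 with hm0 | rfl | hm0
  · nlinarith
  · omega
  · nlinarith

lemma Fintype.exists_eq_ite_of_sum_eq_one {α : Type*} [Fintype α] [DecidableEq α]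
    {f : α → ℕ} (h : ∑ a, f a = 1) : ∃ a₀, ∀ a, f a = if a = a₀ then 1 else 0 := by
  obtain ⟨a₀, -, ha₀⟩ := exists_ne_zero_of_sum_ne_zero (h ▸ one_ne_zero)
  refine ⟨a₀, fun a => ?_⟩
  rw [← add_sum_erase _ f (mem_univ a₀)] at h
  split_ifs with ha
  · subst ha
    omega
  · exact sum_eq_zero_iff.mp (by omega) a (mem_erase.mpr ⟨ha, mem_univ a⟩)

lemma ZMod.sum_univ_eq_zero_of_odd {n : ℕ} [NeZero n] (hn : Odd n) : ∑ i : ZMod n, i = 0 := by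
  have h2 : IsUnit (2 : ZMod n) := by
    exact_mod_cast (ZMod.isUnit_iff_coprime 2 n).mpr (Nat.coprime_two_left.mpr hn)
  refine h2.mul_left_cancel ?_
  rw [mul_zero, two_mul]
  nth_rewrite 2 [← Equiv.sum_comp (Equiv.neg _)]
  simp only [Equiv.neg_apply]
  rw [sum_neg_distrib, add_neg_cancel]

lemma sum_card_fiber_smul {ι α M : Type*} [Fintype ι] [Fintype α] [DecidableEq α]
    [AddCommMonoid M] (g : ι → α) (f : α → M) :
    ∑ x, #{k | g k = x} • f x = ∑ k, f (g k) := by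
  simp_rw [← sum_const]
  exact sum_fiberwise' univ g f

lemma sum_eq_of_card_fiber_eq_ite {ι α β : Type*} [Fintype ι] [Fintype α] [Fintype β]
    [DecidableEq α] [DecidableEq β] [AddCommMonoid α] [AddCommMonoid β] (g : ι → α × β)
    {i₀ : α} {j₀ : β}
    (h : ∀ x, #{k | g k = x} = (if x.1 = i₀ then 1 else 0) + (if x.2 = j₀ then 1 else 0)) :
    ∑ k, g k = (Fintype.card β • i₀ + ∑ i, i, ∑ j, j + Fintype.card α • j₀) := by
  refine (sum_card_fiber_smul g id).symm.trans ?_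
  simp only [h, add_smul, ite_smul, one_smul, zero_smul, sum_add_distrib, id]
  rw [Fintype.sum_prod_type, Fintype.sum_prod_type_right]
  ext <;> simp [Prod.fst_sum, Prod.snd_sum, sum_ite_irrel, apply_ite]

lemma exists_nat_add_of_cast_eq_add {α β : Type*} [Finite α] [Nonempty α] [Nonempty β]
    {c : α × β → ℕ} {a : α → ℚ} {b : β → ℚ} (h : ∀ x, (c x : ℚ) = a x.1 + b x.2) :
    ∃ (E : α → ℕ) (F : β → ℕ), ∀ x, c x = E x.1 + F x.2 := by
  obtain ⟨j₀⟩ := ‹Nonempty β›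
  obtain ⟨i₁, hi₁⟩ := Finite.exists_min fun i => c (i, j₀)
  refine ⟨fun i => c (i, j₀) - c (i₁, j₀), fun j => c (i₁, j), fun ⟨i, j⟩ => ?_⟩
  have hexch : c (i, j) + c (i₁, j₀) = c (i, j₀) + c (i₁, j) := by
    have : (c (i, j) : ℚ) + c (i₁, j₀) = c (i, j₀) + c (i₁, j) := by
      rw [h, h, h, h]
      ring
    exact_mod_cast this
  have := hi₁ i
  dsimp only
  omega

lemma ZMod.natCast_ne_zero_of_prime_ne {p q : ℕ} [Fact p.Prime] [Fact q.Prime]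
    (hpq : p ≠ q) : (q : ZMod p) ≠ 0 := by
  rw [Ne, ZMod.natCast_eq_zero_iff]
  exact fun h => hpq ((Nat.prime_dvd_prime_iff_eq Fact.out Fact.out).mp h)

section RowColumnSum

variable (p q : ℕ)

def rowColumnSum : (ZMod p → ℚ) × (ZMod q → ℚ) →ₗ[ℚ] (ZMod p × ZMod q → ℚ) :=
  (LinearMap.funLeft ℚ ℚ Prod.fst).coprod (LinearMap.funLeft ℚ ℚ Prod.snd)

variable {p q}

@[simp] lemma rowColumnSum_apply (a : ZMod p → ℚ) (b : ZMod q → ℚ) (x : ZMod p × ZMod q) :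
    rowColumnSum p q (a, b) x = a x.1 + b x.2 := rfl

lemma finrank_range_rowColumnSum [NeZero p] [NeZero q] :
    p + q ≤ finrank ℚ (LinearMap.range (rowColumnSum p q)) + 1 := by
  have hker :
      LinearMap.ker (rowColumnSum p q) ≤ ℚ ∙ ((1 : ZMod p → ℚ), (-1 : ZMod q → ℚ)) := by
    rintro ⟨a, b⟩ h
    have hab : ∀ i j, a i + b j = 0 := fun i j => congrFun (LinearMap.mem_ker.mp h) (i, j)
    refine mem_span_singleton.mpr ⟨a 0, Prod.ext (funext fun i => ?_) (funext fun j => ?_)⟩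
    · simp only [Prod.smul_fst, Pi.smul_apply, Pi.one_apply, smul_eq_mul, mul_one]
      linarith [hab i 0, hab 0 0]
    · simp only [Prod.smul_snd, Pi.smul_apply, Pi.neg_apply, Pi.one_apply, smul_eq_mul, mul_neg,
        mul_one]
      linarith [hab 0 j]
  have hrank := (rowColumnSum p q).finrank_range_add_finrank_ker
  have hspan : finrank ℚ (LinearMap.ker (rowColumnSum p q)) ≤ 1 :=
    (Submodule.finrank_mono hker).trans ((finrank_span_le_card ({_} : Set _)).trans (by simp))
  simp only [finrank_prod, finrank_fintype_fun_eq_card, ZMod.card] at hrank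
  omega

end RowColumnSum

lemma isPrimitiveRoot_addChar_one_one {M : Type*} [CommMonoid M] {p q : ℕ}
    {ψ : AddChar (ZMod p × ZMod q) M} (hψ : Function.Injective ψ) (hpq : p.Coprime q) :
    IsPrimitiveRoot (ψ (1, 1)) (p * q) := by
  have hpow : ∀ l : ℕ, ψ (1, 1) ^ l = ψ (l, l) := fun l => by
    rw [← AddChar.map_nsmul_eq_pow, Prod.smul_mk, nsmul_one, nsmul_one]
  refine ⟨?_, fun l hl => ?_⟩
  · rw [hpow, ← AddChar.map_zero_eq_one ψ]
    congr 1
    ext <;> simp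
  · rw [hpow, ← AddChar.map_zero_eq_one ψ] at hl
    obtain ⟨hlp, hlq⟩ := Prod.ext_iff.mp (hψ hl)
    exact hpq.mul_dvd_of_dvd_of_dvd ((ZMod.natCast_eq_zero_iff l p).mp hlp)
      ((ZMod.natCast_eq_zero_iff l q).mp hlq)

section VanishingSums

variable {K : Type*} [Field K] [CharZero K] {p q : ℕ} [Fact p.Prime] [Fact q.Prime]
  {ψ : AddChar (ZMod p × ZMod q) K}

lemma range_rowColumnSum_le_ker (hψ : Function.Injective ψ) :
    LinearMap.range (rowColumnSum p q) ≤ LinearMap.ker (Fintype.linearCombination ℚ ψ) := by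
  rintro _ ⟨⟨a, b⟩, rfl⟩
  have hsplit : ∀ i j, ψ (i, j) = ψ (i, 0) * ψ (0, j) := fun i j => by
    rw [← AddChar.map_add_eq_mul, Prod.mk_add_mk, add_zero, zero_add]
  have hrow : ∀ i, ∑ j, ψ (i, j) = 0 := fun i => by
    rw [sum_congr rfl fun j _ => hsplit i j, ← mul_sum]
    exact mul_eq_zero_of_right _ <| AddChar.sum_eq_zero_of_injective
      (φ := ψ.compAddMonoidHom (AddMonoidHom.inr _ _)) (hψ.comp (Prod.mk_right_injective 0))
  have hcol : ∀ j, ∑ i, ψ (i, j) = 0 := fun j => by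
    rw [sum_congr rfl fun i _ => hsplit i j, ← sum_mul]
    exact mul_eq_zero_of_left (AddChar.sum_eq_zero_of_injective
      (φ := ψ.compAddMonoidHom (AddMonoidHom.inl _ _)) (hψ.comp (Prod.mk_left_injective 0))) _
  simp only [LinearMap.mem_ker, Fintype.linearCombination_apply, rowColumnSum_apply, add_smul,
    sum_add_distrib]
  rw [Fintype.sum_prod_type, Fintype.sum_prod_type_right]
  simp [← smul_sum, hrow, hcol]

lemma finrank_span_range_addChar (hψ : Function.Injective ψ) (hpq : p ≠ q) :
    (p - 1) * (q - 1) ≤ finrank ℚ (span ℚ (Set.range ψ)) := by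
  have hcop : p.Coprime q := (Nat.coprime_primes Fact.out Fact.out).mpr hpq
  have hζ := isPrimitiveRoot_addChar_one_one hψ hcop
  have hpos : 0 < p * q := Nat.mul_pos (NeZero.pos p) (NeZero.pos q)
  have hadjoin :
      Subalgebra.toSubmodule (Algebra.adjoin ℚ {ψ (1, 1)}) ≤ span ℚ (Set.range ψ) := by
    rw [Algebra.adjoin_eq_span, ← Submonoid.powers_eq_closure, span_le]
    rintro _ ⟨n, rfl⟩
    exact subset_span ⟨n • (1, 1), AddChar.map_nsmul_eq_pow ψ n (1, 1)⟩
  calc (p - 1) * (q - 1) = (p * q).totient := by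
        rw [Nat.totient_mul hcop, Nat.totient_prime Fact.out, Nat.totient_prime Fact.out]
    _ = finrank ℚ (Algebra.adjoin ℚ {ψ (1, 1)}) := by
        rw [(Algebra.adjoin.powerBasis (hζ.isIntegral hpos).tower_top).finrank,
          Algebra.adjoin.powerBasis_dim, ← cyclotomic_eq_minpoly_rat hζ hpos,
          natDegree_cyclotomic]
    _ ≤ finrank ℚ (span ℚ (Set.range ψ)) := by
        have := Module.Finite.span_of_finite ℚ (Set.finite_range ψ)
        rw [← Subalgebra.finrank_toSubmodule]
        exact Submodule.finrank_mono hadjoin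

lemma ker_linearCombination_addChar (hψ : Function.Injective ψ) (hpq : p ≠ q) :
    LinearMap.ker (Fintype.linearCombination ℚ ψ) = LinearMap.range (rowColumnSum p q) := by
  refine (Submodule.eq_of_le_of_finrank_le (range_rowColumnSum_le_ker hψ) ?_).symm
  have hrank := (Fintype.linearCombination ℚ ψ).finrank_range_add_finrank_ker
  rw [Fintype.range_linearCombination, finrank_fintype_fun_eq_card, Fintype.card_prod,
    ZMod.card, ZMod.card] at hrank
  have hT := finrank_span_range_addChar hψ hpq
  have hL := finrank_range_rowColumnSum (p := p) (q := q)
  have hp := (Fact.out : p.Prime).one_le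
  have hq := (Fact.out : q.Prime).one_le
  have : (p - 1) * (q - 1) + (p + q - 1) = p * q := by
    zify [hp, hq, (by omega : 1 ≤ p + q)]
    ring
  omega

theorem exists_card_fiber_eq_of_sum_addChar_eq_zero (hψ : Function.Injective ψ) (hpq : p ≠ q)
    {ι : Type*} [Fintype ι] (g : ι → ZMod p × ZMod q) (hcard : Fintype.card ι = p + q)
    (hg : ∑ k, ψ (g k) = 0) :
    ∃ i₀ j₀, ∀ x,
      #{k | g k = x} = (if x.1 = i₀ then 1 else 0) + (if x.2 = j₀ then 1 else 0) := by
  have hker :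
      (fun x => (#{k | g k = x} : ℚ)) ∈ LinearMap.ker (Fintype.linearCombination ℚ ψ) := by
    rw [LinearMap.mem_ker, Fintype.linearCombination_apply, ← hg, ← sum_card_fiber_smul]
    simp [Nat.cast_smul_eq_nsmul]
  rw [ker_linearCombination_addChar hψ hpq] at hker
  obtain ⟨⟨a, b⟩, hab⟩ := hker
  obtain ⟨E, F, hEF⟩ := exists_nat_add_of_cast_eq_add (c := fun x => #{k | g k = x})
    fun x => (congrFun hab x).symm
  have htotal : q * ∑ i, E i + p * ∑ j, F j = p + q := by
    have := sum_card_fiber_smul g fun _ => 1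
    simp only [smul_eq_mul, mul_one, sum_const, card_univ, hcard, hEF] at this
    rw [← this, Fintype.sum_prod_type]
    simp [sum_add_distrib, mul_sum]
  have hF : ∑ j, F j = 1 := Nat.eq_one_of_mul_add_mul_eq_add Fact.out Fact.out hpq htotal
  have hE : ∑ i, E i = 1 :=
    Nat.eq_one_of_mul_add_mul_eq_add (s := ∑ j, F j) Fact.out Fact.out hpq.symm (by lia)
  obtain ⟨i₀, hi₀⟩ := Fintype.exists_eq_ite_of_sum_eq_one hE
  obtain ⟨j₀, hj₀⟩ := Fintype.exists_eq_ite_of_sum_eq_one hF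
  exact ⟨i₀, j₀, fun x => by rw [hEF, hi₀, hj₀]⟩

theorem card_fiber_sub_eq_axes (hψ : Function.Injective ψ) (hpq : p ≠ q) (hp : Odd p)
    (hq : Odd q) {G : Type*} [AddCommGroup G] [Fintype G] (hG : Fintype.card G = p + q)
    (X : G → ZMod p × ZMod q) {d : G} (h : ∑ k, ψ (X (k - d) - X k) = 0) (x : ZMod p × ZMod q) :
    #{k | X (k - d) - X k = x} = (if x.1 = 0 then 1 else 0) + (if x.2 = 0 then 1 else 0) := by
  obtain ⟨i₀, j₀, hc⟩ := exists_card_fiber_eq_of_sum_addChar_eq_zero hψ hpq _ hG h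
  have htel : ∑ k, (X (k - d) - X k) = 0 := by
    rw [sum_sub_distrib,
      Fintype.sum_equiv (Equiv.subRight d) (fun k => X (k - d)) X fun _ => rfl, sub_self]
  rw [sum_eq_of_card_fiber_eq_ite _ hc, ZMod.card, ZMod.card, ZMod.sum_univ_eq_zero_of_odd hp,
    ZMod.sum_univ_eq_zero_of_odd hq, add_zero, zero_add, Prod.mk_eq_zero, nsmul_eq_mul,
    nsmul_eq_mul] at htel
  have hi₀ := (mul_eq_zero.mp htel.1).resolve_left (ZMod.natCast_ne_zero_of_prime_ne hpq)
  have hj₀ := (mul_eq_zero.mp htel.2).resolve_left (ZMod.natCast_ne_zero_of_prime_ne hpq.symm)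
  rw [hc, hi₀, hj₀]

end VanishingSums

theorem exists_card_fiber_sub_ne_axes {G A B : Type*} [AddCommGroup G] [Fintype G]
    [Nontrivial G] [AddGroup A] [Nontrivial A] [DecidableEq A] [AddGroup B] [Nontrivial B]
    [DecidableEq B] (X : G → A × B) : ∃ d ≠ 0, ∃ x, #{k | X (k - d) - X k = x} ≠
      (if x.1 = 0 then 1 else 0) + (if x.2 = 0 then 1 else 0) := by
  by_contra! h
  have hpair : Pairwise fun k k' => (X k).1 = (X k').1 ∨ (X k).2 = (X k').2 := by
    intro k k' hkk'
    have hpos : 0 < #{l | X (l - (k' - k)) - X l = X k - X k'} := card_pos.mpr ⟨k', by simp⟩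
    rw [h _ (sub_ne_zero.mpr hkk'.symm)] at hpos
    by_contra! hne
    simp [sub_eq_zero, hne.1, hne.2] at hpos
  obtain ⟨d, hd⟩ := exists_ne (0 : G)
  rcases forall_eq_or_forall_eq_of_pairwise hpair with hfst | hsnd
  · obtain ⟨a, ha⟩ := exists_ne (0 : A)
    have hpos : 0 < #{k | X (k - d) - X k = (a, 0)} := by simp [h d hd, ha]
    obtain ⟨k, hk⟩ := card_pos.mp hpos
    simp [Prod.ext_iff, hfst (k - d) k, ha.symm] at hk
  · obtain ⟨b, hb⟩ := exists_ne (0 : B)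
    have hpos : 0 < #{k | X (k - d) - X k = (0, b)} := by simp [h d hd, hb]
    obtain ⟨k, hk⟩ := card_pos.mp hpos
    simp [Prod.ext_iff, hsnd (k - d) k, hb.symm] at hk

lemma IsHadamard.sum_mul_conj_eq_zero {n : ℕ} [NeZero n] {H : Matrix (ZMod n) (ZMod n) ℂ}
    (hH : _root_.IsHadamard H) {ξ : ZMod n → ℂ} (hξ : ∀ i j, H i j = ξ (j - i)) {d : ZMod n}
    (hd : d ≠ 0) : ∑ k, ξ (k - d) * starRingEnd ℂ (ξ k) = 0 := by
  simpa [Matrix.mul_apply, hξ, hd] using congrFun (congrFun hH.2 d) 0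

lemma ZMod.exists_stdAddChar_eq_of_pow_eq_one {N : ℕ} [NeZero N] {z : ℂ} (hz : z ^ N = 1) :
    ∃ j : ZMod N, stdAddChar j = z := by
  have hζ : IsPrimitiveRoot (stdAddChar (1 : ZMod N)) N := by
    convert Complex.isPrimitiveRoot_exp N (NeZero.ne N) using 1
    simpa using ZMod.stdAddChar_coe (N := N) 1
  obtain ⟨i, -, hi⟩ := hζ.eq_pow_of_pow_eq_one hz
  exact ⟨i, by rw [← hi, ← AddChar.map_nsmul_eq_pow, nsmul_one]⟩

/-- For distinct primes `p, q ≥ 5` there is no circulant complex Hadamard matrix of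
order `p+q` all of whose entries are `pq`-th roots of unity. -/
theorem no_circulant_butson_p_plus_q
    (p q : ℕ) (hp : p.Prime) (hq : q.Prime) (hp5 : 5 ≤ p) (hq5 : 5 ≤ q) (hpq : p ≠ q)
    [NeZero (p + q)] :
    ¬ ∃ H : Matrix (ZMod (p + q)) (ZMod (p + q)) ℂ,
        (∃ ξ : ZMod (p + q) → ℂ, ∀ i j, H i j = ξ (j - i)) ∧
        _root_.IsHadamard H ∧
        (∀ i j, (H i j) ^ (p * q) = 1) := by
  rintro ⟨H, ⟨ξ, hξ⟩, hH, hroots⟩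
  have := Fact.mk hp
  have := Fact.mk hq
  have : Fact (1 < p + q) := ⟨by omega⟩
  let e := ZMod.chineseRemainder ((Nat.coprime_primes hp hq).mpr hpq)
  let ψ : AddChar (ZMod p × ZMod q) ℂ :=
    ZMod.stdAddChar.compAddMonoidHom e.symm.toAddMonoidHom
  have hψ : Function.Injective ψ := ZMod.injective_stdAddChar.comp e.symm.injective
  obtain ⟨X, hX⟩ : ∃ X : ZMod (p + q) → ZMod p × ZMod q, ∀ m, ξ m = ψ (X m) := by
    choose j hj using fun m =>
      ZMod.exists_stdAddChar_eq_of_pow_eq_one (by simpa [hξ] using hroots 0 m)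
    exact ⟨fun m => e (j m), fun m => by simp [ψ, hj]⟩
  obtain ⟨d, hd, x, hx⟩ := exists_card_fiber_sub_ne_axes X
  refine hx (card_fiber_sub_eq_axes hψ hpq (hp.odd_of_ne_two (by omega))
    (hq.odd_of_ne_two (by omega)) (ZMod.card _) X ?_ x)
  simpa only [hX, ← AddChar.map_neg_eq_conj, ← AddChar.map_add_eq_mul, ← sub_eq_add_neg] using
    hH.sum_mul_conj_eq_zero hξ hd
end

section
/- For n odd the vector given by z_k = e^{2πik/n} (k = 0,…,n−1) is a cyclic n-root, and for n even the vector given by z_k = e^{(2k+1)πi/n} is a cyclic n-root. In both cases, the associated circulant matrix H_{ij} = ξ_{j−i}, where ξ_0 = 1 and ξ_j = z_1 z_2 ⋯ z_j, is a complex Hadamard matrix equivalent to the Fourier matrix F_n. -/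
open Complex Matrix

/-- The `n×n` Fourier matrix `(w^{ij})` with `w = e^{2πi/n}`. -/
noncomputable def Fourier (n : ℕ) : Matrix (ZMod n) (ZMod n) ℂ :=
  fun i j => Complex.exp (2 * Real.pi * Complex.I * (i.val * j.val) / n)

/-- A cyclic `n`-root. -/
def IsCyclicRoot {n : ℕ} [NeZero n] (z : ZMod n → ℂ) : Prop :=
  (∀ k : ℕ, 1 ≤ k → k ≤ n - 1 →
      ∑ i : ZMod n, ∏ t ∈ Finset.range k, z (i + (t : ZMod n)) = 0) ∧
  ∏ i : ZMod n, z i = 1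

/-- Equivalence of complex Hadamard matrices. -/
def HadEquiv {I J : Type*} (H : Matrix I I ℂ) (K : Matrix J J ℂ) : Prop :=
  ∃ (σ τ : I ≃ J) (d e : I → ℂ),
    (∀ i, ‖d i‖ = 1) ∧ (∀ j, ‖e j‖ = 1) ∧
    ∀ i j, K (σ i) (τ j) = d i * e j * H i j

/-! Let `ζ = e^{πi/n}` and choose `A ∈ {0, 1}` with `n + A` odd, so that `z_k = ζ^{2k+A}` in
both cases. The partial products are the chirp `ξ_j = ζ^{j(j+A+1)}`, and the parity of `n + A`
makes `j ↦ ζ^{j(j+A+1)}` `n`-periodic, so `ξ` is a function on `ZMod n`. Every even power of `ζ`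
is a value of the standard additive character `ψ` of `ZMod n`, and `F_{ij} = ψ(ij)`.

* A window product `z_i ⋯ z_{i+k-1}` is `ψ(ki)` times a constant, so the cyclic sums vanish by
  orthogonality of `ψ`, and the full product is `ζ^{n(n-1+A)} = 1`.
* Expanding `(j-i)(j-i+A+1)` gives `ξ_{j-i} = ξ_{-i} ξ_j F_{i,-j}`: up to unimodular row and
  column scalings and the column permutation `j ↦ -j`, `H` is `F_n`, and scalings and
  permutations preserve `H H^* = n I`. -/

open Finset
open scoped Real

noncomputable def halfRoot (n : ℕ) : ℂ := exp (π * I / n)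

lemma halfRoot_ne_zero (n : ℕ) : halfRoot n ≠ 0 := exp_ne_zero _

lemma halfRoot_zpow (n : ℕ) (m : ℤ) : halfRoot n ^ m = exp (π * I * m / n) := by
  rw [halfRoot, ← exp_int_mul]
  ring_nf

lemma norm_halfRoot_zpow (n : ℕ) (m : ℤ) : ‖halfRoot n ^ m‖ = 1 := by
  have h : ‖halfRoot n‖ = 1 := by
    rw [halfRoot, show (π : ℂ) * I / n = ((π / n : ℝ) : ℂ) * I by push_cast; ring]
    exact norm_exp_ofReal_mul_I _
  rw [norm_zpow, h, _root_.one_zpow]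

lemma halfRoot_zpow_two_mul (n : ℕ) [NeZero n] (m : ℤ) :
    halfRoot n ^ (2 * m) = ZMod.stdAddChar (m : ZMod n) := by
  rw [halfRoot_zpow, ZMod.stdAddChar_coe]
  push_cast
  ring_nf

lemma star_stdAddChar {n : ℕ} [NeZero n] (x : ZMod n) :
    star (ZMod.stdAddChar x) = ZMod.stdAddChar (-x) := by
  rw [ZMod.stdAddChar_apply, ZMod.stdAddChar_apply, AddChar.map_neg_eq_inv,
    Circle.coe_inv_eq_conj]
  rfl

lemma sum_stdAddChar_mul {n : ℕ} [NeZero n] (b : ZMod n) :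
    ∑ x : ZMod n, ZMod.stdAddChar (x * b) = if b = 0 then (n : ℂ) else 0 := by
  rw [AddChar.sum_mulShift b (ZMod.isPrimitive_stdAddChar n), ZMod.card]
  split_ifs <;> simp

lemma prod_zmod_eq_prod_range {M : Type*} [CommMonoid M] (n : ℕ) [NeZero n] (f : ZMod n → M) :
    ∏ c, f c = ∏ t ∈ range n, f t :=
  prod_nbij' ZMod.val (↑) (fun c _ => mem_range.2 c.val_lt) (fun _ _ => mem_univ _)
    (fun c _ => ZMod.natCast_zmod_val c) (fun t ht => ZMod.val_cast_of_lt (mem_range.1 ht))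
    (fun c _ => by rw [ZMod.natCast_zmod_val])

lemma Fourier_apply {n : ℕ} [NeZero n] (i j : ZMod n) :
    Fourier n i j = ZMod.stdAddChar (i * j) := by
  have h : i * j = (((i.val * j.val : ℕ) : ℤ) : ZMod n) := by
    push_cast
    rw [ZMod.natCast_zmod_val, ZMod.natCast_zmod_val]
  rw [Fourier, h, ZMod.stdAddChar_coe]
  push_cast
  ring_nf

theorem isHadamard_Fourier (n : ℕ) [NeZero n] : _root_.IsHadamard (Fourier n) := by
  refine ⟨fun i j => by rw [Fourier_apply, ZMod.stdAddChar_apply, Circle.norm_coe], ?_⟩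
  ext i i'
  have h : ∀ k, Fourier n i k * star (Fourier n i' k) = ZMod.stdAddChar (k * (i - i')) := by
    intro k
    rw [Fourier_apply, Fourier_apply, star_stdAddChar, ← AddChar.map_add_eq_mul]
    ring_nf
  simp only [mul_apply, conjTranspose_apply, h, sum_stdAddChar_mul, sub_eq_zero,
    Matrix.smul_apply, one_apply, smul_eq_mul, mul_ite, mul_one, mul_zero]

theorem HadEquiv.mul_conjTranspose_eq_smul_one {I J : Type*} [Fintype I] [Fintype J]
    [DecidableEq I] [DecidableEq J] {H : Matrix I I ℂ} {K : Matrix J J ℂ} {c : ℂ}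
    (hK : K * Kᴴ = c • 1) (h : HadEquiv H K) : H * Hᴴ = c • 1 := by
  obtain ⟨σ, τ, d, e, hd, he, hK'⟩ := h
  have star_mul_self : ∀ x : ℂ, ‖x‖ = 1 → star x * x = 1 := fun x hx => by
    rw [Complex.star_def, Complex.conj_mul', hx]
    norm_num
  have hH : ∀ i j, H i j = star (d i) * star (e j) * K (σ i) (τ j) := fun i j => by
    rw [hK', ← mul_assoc, mul_mul_mul_comm, star_mul_self _ (hd i), star_mul_self _ (he j),
      one_mul, one_mul]
  have hrow : ∀ i i',
      ∑ j, K (σ i) (τ j) * star (K (σ i') (τ j)) = (c • 1 : Matrix I I ℂ) i i' := by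
    intro i i'
    rw [Equiv.sum_comp τ (fun j => K (σ i) j * star (K (σ i') j))]
    simpa [mul_apply, one_apply, σ.injective.eq_iff] using congr_fun₂ hK (σ i) (σ i')
  ext i i'
  calc (H * Hᴴ) i i'
      = star (d i) * d i' * ∑ j, star (e j) * e j * (K (σ i) (τ j) * star (K (σ i') (τ j))) := by
        simp only [mul_apply, conjTranspose_apply, hH, star_mul', star_star, Finset.mul_sum]
        exact Finset.sum_congr rfl fun j _ => by ring
    _ = (c • 1 : Matrix I I ℂ) i i' := by
        simp only [star_mul_self _ (he _), one_mul, hrow, Matrix.smul_apply, one_apply]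
        split_ifs with hii
        · rw [hii, star_mul_self _ (hd i'), one_mul]
        · simp

theorem IsHadamard.of_hadEquiv {n : ℕ} [NeZero n] {H K : Matrix (ZMod n) (ZMod n) ℂ}
    (hK : _root_.IsHadamard K) (h : HadEquiv H K) : _root_.IsHadamard H := by
  refine ⟨fun i j => ?_, h.mul_conjTranspose_eq_smul_one hK.2⟩
  obtain ⟨σ, τ, d, e, hd, he, hK'⟩ := h
  simpa [hK', hd, he] using hK.1 (σ i) (τ j)

noncomputable def chirpRatio (n : ℕ) (A : ℤ) (c : ZMod n) : ℂ :=
  halfRoot n ^ (2 * (c.val : ℤ) + A)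

noncomputable def chirp (n : ℕ) (A : ℤ) (m : ℤ) : ℂ := halfRoot n ^ (m * (m + A + 1))

lemma chirp_sub (n : ℕ) (A a b : ℤ) :
    chirp n A (b - a) = chirp n A (-a) * chirp n A b * halfRoot n ^ (2 * -(a * b)) := by
  rw [chirp, chirp, chirp, ← zpow_add₀ (halfRoot_ne_zero n), ← zpow_add₀ (halfRoot_ne_zero n)]
  ring_nf

lemma norm_chirp (n : ℕ) (A m : ℤ) : ‖chirp n A m‖ = 1 := norm_halfRoot_zpow n _

section

variable (n : ℕ) [NeZero n] (A : ℤ)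

lemma chirpRatio_intCast (m : ℤ) : chirpRatio n A m = halfRoot n ^ (2 * m + A) := by
  rw [chirpRatio, zpow_add₀ (halfRoot_ne_zero n), zpow_add₀ (halfRoot_ne_zero n),
    halfRoot_zpow_two_mul, halfRoot_zpow_two_mul, Int.cast_natCast, ZMod.natCast_zmod_val]

lemma prod_range_chirpRatio (i : ℤ) (k : ℕ) :
    ∏ t ∈ range k, chirpRatio n A (i + t) = halfRoot n ^ (k * (2 * i + k - 1 + A)) := by
  induction k with
  | zero => simp
  | succ k ih =>
    have hcast : (i : ZMod n) + k = ((i + k : ℤ) : ZMod n) := by push_cast; rfl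
    rw [prod_range_succ, ih, hcast, chirpRatio_intCast, ← zpow_add₀ (halfRoot_ne_zero n)]
    congr 1
    push_cast
    ring

theorem isCyclicRoot_chirpRatio (hA : Odd ((n : ℤ) + A)) : IsCyclicRoot (chirpRatio n A) := by
  refine ⟨fun k hk1 hkn => ?_, ?_⟩
  · have hwindow : ∀ i : ZMod n, ∏ t ∈ range k, chirpRatio n A (i + t)
        = ZMod.stdAddChar (i * (k : ZMod n)) * halfRoot n ^ (k * ((k : ℤ) - 1 + A)) := fun i => by
      rw [← ZMod.intCast_zmod_cast i, prod_range_chirpRatio, ← Int.cast_natCast (R := ZMod n) k,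
        ← Int.cast_mul, ← halfRoot_zpow_two_mul, ← zpow_add₀ (halfRoot_ne_zero n)]
      ring_nf
    have hk : (k : ZMod n) ≠ 0 := by
      rw [Ne, ZMod.natCast_eq_zero_iff]
      exact fun h => absurd (Nat.le_of_dvd (by omega) h) (by omega)
    rw [sum_congr rfl fun i _ => hwindow i, ← sum_mul, sum_stdAddChar_mul, if_neg hk, zero_mul]
  · obtain ⟨c, hc⟩ := hA
    have hn : ((n * c : ℤ) : ZMod n) = 0 := by
      push_cast
      rw [ZMod.natCast_self, zero_mul]
    have hprod := prod_range_chirpRatio n A 0 n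
    simp only [Int.cast_zero, zero_add] at hprod
    calc ∏ c, chirpRatio n A c
        = halfRoot n ^ (2 * (n * c)) := by
          rw [prod_zmod_eq_prod_range, hprod]
          congr 1
          linear_combination (n : ℤ) * hc
      _ = 1 := by rw [halfRoot_zpow_two_mul, hn, AddChar.map_zero_eq_one]

lemma prod_range_chirpRatio_add_one (k : ℕ) :
    ∏ t ∈ range k, chirpRatio n A (t + 1) = chirp n A k := by
  calc ∏ t ∈ range k, chirpRatio n A (t + 1)
      = ∏ t ∈ range k, chirpRatio n A ((1 : ℤ) + t) := by simp only [Int.cast_one, add_comm]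
    _ = chirp n A k := by rw [prod_range_chirpRatio, chirp]; ring_nf

lemma chirp_periodic (hA : Odd ((n : ℤ) + A)) : Function.Periodic (chirp n A) n := by
  obtain ⟨c, hc⟩ := hA
  intro m
  have hn : ((n * (m + c + 1) : ℤ) : ZMod n) = 0 := by
    push_cast
    rw [ZMod.natCast_self, zero_mul]
  calc chirp n A (m + n)
      = chirp n A m * halfRoot n ^ (2 * (n * (m + c + 1))) := by
        rw [chirp, chirp, ← zpow_add₀ (halfRoot_ne_zero n)]
        congr 1
        linear_combination (n : ℤ) * hc
    _ = chirp n A m := by rw [halfRoot_zpow_two_mul, hn, AddChar.map_zero_eq_one, mul_one]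

lemma chirp_val_intCast (hA : Odd ((n : ℤ) + A)) (m : ℤ) :
    chirp n A ((m : ZMod n).val) = chirp n A m := by
  rw [ZMod.val_intCast, Int.emod_def, mul_comm]
  simpa using (chirp_periodic n A hA).sub_int_mul_eq (x := m) (m / n)

end

noncomputable def chirpMatrix (n : ℕ) (A : ℤ) : Matrix (ZMod n) (ZMod n) ℂ :=
  of fun i j => chirp n A (j - i).val

theorem hadEquiv_chirpMatrix (n : ℕ) [NeZero n] (A : ℤ) (hA : Odd ((n : ℤ) + A)) :
    HadEquiv (chirpMatrix n A) (Fourier n) := by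
  have hne : ∀ m, chirp n A m ≠ 0 := fun m => zpow_ne_zero _ (halfRoot_ne_zero n)
  refine ⟨Equiv.refl _, Equiv.neg _, fun i => (chirp n A (-i.val))⁻¹,
    fun j => (chirp n A j.val)⁻¹,
    fun i => by rw [norm_inv, norm_chirp, inv_one], fun j => by rw [norm_inv, norm_chirp, inv_one],
    fun i j => ?_⟩
  have hF : Fourier n i (-j) = halfRoot n ^ (2 * -((i.val : ℤ) * j.val)) := by
    rw [Fourier_apply, halfRoot_zpow_two_mul]
    push_cast
    rw [ZMod.natCast_zmod_val, ZMod.natCast_zmod_val, mul_neg]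
  have hH : chirpMatrix n A i j
      = chirp n A (-i.val) * chirp n A j.val * halfRoot n ^ (2 * -((i.val : ℤ) * j.val)) := by
    have hcast : j - i = ((j.val - i.val : ℤ) : ZMod n) := by
      push_cast
      rw [ZMod.natCast_zmod_val, ZMod.natCast_zmod_val]
    rw [chirpMatrix, of_apply, hcast, chirp_val_intCast n A hA, chirp_sub]
  rw [Equiv.refl_apply, Equiv.neg_apply, hF, hH]
  field_simp [hne]

/-- The Fourier matrix can be put in circulant form: for `n` odd `z_k = e^{2πik/n}`
and for `n` even `z_k = e^{(2k+1)πi/n}` is a cyclic `n`-root, and the associated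
circulant matrix is Hadamard and equivalent to `F_n`. -/
theorem fourier_circulant_form
    (n : ℕ) [NeZero n] (z : ZMod n → ℂ)
    (hzodd : Odd n → ∀ k : ZMod n, z k = Complex.exp (2 * Real.pi * Complex.I * k.val / n))
    (hzeven : Even n → ∀ k : ZMod n,
      z k = Complex.exp ((2 * k.val + 1) * Real.pi * Complex.I / n))
    (ξ : ZMod n → ℂ) (hξ : ∀ j : ZMod n, ξ j = ∏ t ∈ Finset.range j.val, z ((t : ZMod n) + 1))
    (H : Matrix (ZMod n) (ZMod n) ℂ) (hH : ∀ i j, H i j = ξ (j - i)) :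
    IsCyclicRoot z ∧ _root_.IsHadamard H ∧ HadEquiv H (Fourier n) := by
  obtain ⟨A, hA, rfl⟩ : ∃ A : ℤ, Odd ((n : ℤ) + A) ∧ z = chirpRatio n A := by
    rcases Nat.even_or_odd n with hn | hn
    · refine ⟨1, by exact_mod_cast hn.add_one, funext fun k => ?_⟩
      rw [hzeven hn, chirpRatio, halfRoot_zpow]
      push_cast
      ring_nf
    · refine ⟨0, by simpa using hn, funext fun k => ?_⟩
      rw [hzodd hn, chirpRatio, halfRoot_zpow]
      push_cast
      ring_nf
  obtain rfl : H = chirpMatrix n A := by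
    ext i j
    rw [hH, hξ, prod_range_chirpRatio_add_one, chirpMatrix, of_apply]
  have hF := hadEquiv_chirpMatrix n A hA
  exact ⟨isCyclicRoot_chirpRatio n A hA, (isHadamard_Fourier n).of_hadEquiv hF, hF⟩
end

section
/- Let F = F_n/√n be the normalized Fourier matrix. For a circulant matrix H ∈ M_n(ℂ) with first row x ∈ ℂⁿ, let Φ(H) denote the circulant matrix with first row Fx. Then: (i) H is a (circulant) complex Hadamard matrix if and only if Φ(H) is a (circulant) complex Hadamard matrix; (ii) H is a circulant real Hadamard matrix (all entries ±1, rows pairwise orthogonal) if and only if Φ(H) is a Hermitian circulant complex Hadamard matrix. -/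
/-!
A circulant matrix `H` with first row `x` satisfies `H Hᴴ = n • 1` iff the autocorrelation of `x`
is `n δ₀`, i.e., taking discrete Fourier transforms, iff `|𝓕 x| ≡ √n`. So `Φ(H)` is unimodular iff
`H` has orthogonal rows. By Fourier inversion the transform of the first row `Fx` of `Φ(H)` is
`√n x` up to the flip `k ↦ -k`, so `Φ(H)` has orthogonal rows iff `H` is unimodular. Finally `Φ(H)`
is Hermitian iff `F x̄ = F x`, i.e. iff `x` is real, and a unimodular real vector has entries `±1`.
-/

open Complex Matrix

/-- The normalized Fourier matrix `F = F_n / √n`. -/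
noncomputable def NFourier (n : ℕ) : Matrix (ZMod n) (ZMod n) ℂ :=
  (1 / (Real.sqrt n : ℂ)) • Fourier n

open ZMod Finset ComplexConjugate

lemma Complex.eq_one_or_eq_neg_one_iff (z : ℂ) : z = 1 ∨ z = -1 ↔ ‖z‖ = 1 ∧ star z = z := by
  constructor
  · rintro (rfl | rfl) <;> simp
  · rintro ⟨hz, hreal⟩
    obtain ⟨r, rfl⟩ := Complex.conj_eq_iff_real.mp hreal
    rw [Complex.norm_real, Real.norm_eq_abs, abs_eq zero_le_one] at hz
    rcases hz with rfl | rfl <;> simp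

variable {n : ℕ} {x : ZMod n → ℂ} {H : Matrix (ZMod n) (ZMod n) ℂ}

lemma forall_circulant_iff (P : ℂ → Prop) (hH : ∀ i j, H i j = x (j - i)) :
    (∀ i j, P (H i j)) ↔ ∀ k, P (x k) :=
  ⟨fun h k ↦ by simpa [hH] using h 0 k, fun h i j ↦ hH i j ▸ h _⟩

lemma circulant_conjTranspose_eq_self_iff (hH : ∀ i j, H i j = x (j - i)) :
    Hᴴ = H ↔ ∀ k, star (x (-k)) = x k := by
  refine ⟨fun h k ↦ ?_, fun h ↦ ?_⟩
  · simpa [hH] using congrFun₂ h 0 k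
  · ext i j
    rw [conjTranspose_apply, hH, hH, ← h, neg_sub, star_star]

variable [NeZero n]

def autocorrelation (x : ZMod n → ℂ) (d : ZMod n) : ℂ :=
  ∑ m, x (m + d) * conj (x m)

lemma circulant_mul_conjTranspose_apply (hH : ∀ i j, H i j = x (j - i)) (i l : ZMod n) :
    (H * Hᴴ) i l = autocorrelation x (l - i) := by
  simp only [mul_apply, conjTranspose_apply, hH, autocorrelation, starRingEnd_apply]
  exact Fintype.sum_equiv (Equiv.subRight l) _ _ fun m ↦ by simp

lemma dft_autocorrelation (x : ZMod n → ℂ) (k : ZMod n) :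
    𝓕 (autocorrelation x) k = (‖𝓕 x k‖ ^ 2 : ℝ) := by
  rw [Complex.ofReal_pow, ← Complex.mul_conj', dft_apply, dft_apply, map_sum, sum_mul_sum]
  simp only [autocorrelation, smul_sum]
  rw [sum_comm]
  conv_rhs => rw [sum_comm]
  refine sum_congr rfl fun m _ ↦ Fintype.sum_equiv (Equiv.addLeft m) _ _ fun d ↦ ?_
  have hchar : stdAddChar (-(d * k)) =
      stdAddChar (-((m + d) * k)) * conj (stdAddChar (-(m * k))) := by
    rw [← AddChar.map_neg_eq_conj, ← AddChar.map_add_eq_mul]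
    congr 1
    ring
  simp only [hchar, smul_eq_mul, map_mul, Equiv.coe_addLeft]
  ring

lemma circulant_mul_conjTranspose_eq_iff (hH : ∀ i j, H i j = x (j - i)) :
    H * Hᴴ = (n : ℂ) • 1 ↔ ∀ k, ‖𝓕 x k‖ = √n := by
  have hdelta (i l : ZMod n) :
      ((n : ℂ) • 1 : Matrix _ _ ℂ) i l = (Pi.single 0 (n : ℂ) : ZMod n → ℂ) (l - i) := by
    simp [Pi.single_apply, one_apply, sub_eq_zero, eq_comm]
  calc H * Hᴴ = (n : ℂ) • 1 ↔ autocorrelation x = Pi.single 0 (n : ℂ) := by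
        refine ⟨fun h ↦ funext fun d ↦ ?_, fun h ↦ ?_⟩
        · simpa [circulant_mul_conjTranspose_apply hH, hdelta] using congrFun₂ h 0 d
        · ext i l
          rw [circulant_mul_conjTranspose_apply hH, hdelta, h]
    _ ↔ 𝓕 (autocorrelation x) = 𝓕 (Pi.single 0 (n : ℂ)) := dft.injective.eq_iff.symm
    _ ↔ ∀ k, ‖𝓕 x k‖ = √n := by
        have hsingle (k : ZMod n) : 𝓕 (Pi.single 0 (n : ℂ)) k = n := by
          simp [dft_apply, Pi.single_apply]
        simp only [funext_iff, dft_autocorrelation, hsingle]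
        refine forall_congr' fun k ↦ ?_
        rw [@eq_comm _ ‖𝓕 x k‖, Real.sqrt_eq_iff_eq_sq n.cast_nonneg (norm_nonneg _)]
        norm_cast
        exact eq_comm

lemma fourier_apply_eq_stdAddChar (i j : ZMod n) : Fourier n i j = stdAddChar (i * j) := by
  have h : i * j = ((i.val * j.val : ℕ) : ℤ) := by simp
  rw [h, stdAddChar_coe, Fourier]
  push_cast
  ring_nf

lemma nFourier_mulVec_eq (x : ZMod n → ℂ) :
    NFourier n *ᵥ x = (√n : ℂ)⁻¹ • fun k ↦ 𝓕 x (-k) := by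
  ext k
  simp only [NFourier, mulVec, dotProduct, Matrix.smul_apply, fourier_apply_eq_stdAddChar,
    dft_apply, Pi.smul_apply, smul_eq_mul, mul_sum, one_div, mul_neg, neg_neg]
  exact sum_congr rfl fun j _ ↦ by rw [mul_comm j k]; ring

lemma dft_nFourier_mulVec (x : ZMod n → ℂ) : 𝓕 (NFourier n *ᵥ x) = (√n : ℂ) • x := by
  have hsqrt : (√n : ℂ)⁻¹ * n = √n := by
    rw [inv_mul_eq_div, ← ofReal_natCast, ← ofReal_div, Real.div_sqrt]
  ext k
  rw [nFourier_mulVec_eq, _root_.map_smul, dft_comp_neg, dft_dft]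
  simp [← mul_assoc, hsqrt]

lemma nFourier_mulVec_injective :
    Function.Injective (NFourier n *ᵥ · : (ZMod n → ℂ) → ZMod n → ℂ) := by
  intro x y h
  have h𝓕 := congrArg 𝓕 h
  simp only [dft_nFourier_mulVec] at h𝓕
  exact smul_right_injective _ (by simp [NeZero.ne n]) h𝓕

lemma forall_norm_nFourier_mulVec_eq_one_iff (x : ZMod n → ℂ) :
    (∀ k, ‖(NFourier n *ᵥ x) k‖ = 1) ↔ ∀ k, ‖𝓕 x k‖ = √n := by
  have hn : 0 < √(n : ℝ) := by simp [Nat.pos_of_neZero]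
  simp only [nFourier_mulVec_eq, Pi.smul_apply, smul_eq_mul, norm_mul, norm_inv,
    Complex.norm_real, Real.norm_eq_abs, abs_of_pos hn, inv_mul_eq_one₀ hn.ne', eq_comm]
  exact ⟨fun h k ↦ by simpa using h (-k), fun h k ↦ h _⟩

lemma dft_star_apply (x : ZMod n → ℂ) (k : ZMod n) : 𝓕 (star x) k = conj (𝓕 x (-k)) := by
  simp [dft_apply, map_sum, ← AddChar.map_neg_eq_conj]

lemma star_nFourier_mulVec_apply_neg (x : ZMod n → ℂ) (k : ZMod n) :
    star ((NFourier n *ᵥ x) (-k)) = (NFourier n *ᵥ star x) k := by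
  simp [nFourier_mulVec_eq, dft_star_apply]

/-- The duality `Φ` on circulant matrices (given by `x ↦ Fx` on first rows) maps
complex Hadamard matrices to complex Hadamard matrices, and real Hadamard matrices
to Hermitian complex Hadamard matrices. -/
theorem circulant_duality
    (n : ℕ) [NeZero n] (x : ZMod n → ℂ)
    (H : Matrix (ZMod n) (ZMod n) ℂ) (hH : ∀ i j, H i j = x (j - i))
    (Φ : Matrix (ZMod n) (ZMod n) ℂ)
    (hΦ : ∀ i j, Φ i j = (NFourier n).mulVec x (j - i)) :
    (_root_.IsHadamard H ↔ _root_.IsHadamard Φ) ∧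
    (((∀ i j, H i j = 1 ∨ H i j = -1) ∧ H * Hᴴ = (n : ℂ) • 1) ↔
      (_root_.IsHadamard Φ ∧ Φᴴ = Φ)) := by
  have hΦ_norm : (∀ i j, ‖Φ i j‖ = 1) ↔ H * Hᴴ = (n : ℂ) • 1 := by
    rw [forall_circulant_iff (‖·‖ = 1) hΦ, forall_norm_nFourier_mulVec_eq_one_iff,
      circulant_mul_conjTranspose_eq_iff hH]
  have hΦ_orth : Φ * Φᴴ = (n : ℂ) • 1 ↔ ∀ i j, ‖H i j‖ = 1 := by
    rw [circulant_mul_conjTranspose_eq_iff hΦ, forall_circulant_iff (‖·‖ = 1) hH]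
    have hn : 0 < √(n : ℝ) := by simp [Nat.pos_of_neZero]
    simp [dft_nFourier_mulVec, abs_of_pos hn, hn.ne']
  have hΦ_herm : Φᴴ = Φ ↔ star x = x := by
    rw [circulant_conjTranspose_eq_self_iff hΦ, ← nFourier_mulVec_injective.eq_iff, funext_iff]
    simp only [star_nFourier_mulVec_apply_neg]
  have hH_sign : (∀ i j, H i j = 1 ∨ H i j = -1) ↔ (∀ i j, ‖H i j‖ = 1) ∧ star x = x := by
    rw [forall_circulant_iff (fun z ↦ z = 1 ∨ z = -1) hH, forall_circulant_iff (‖·‖ = 1) hH,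
      funext_iff, ← forall_and]
    exact forall_congr' fun k ↦ Complex.eq_one_or_eq_neg_one_iff (x k)
  simp only [_root_.IsHadamard, hΦ_norm, hΦ_orth, hΦ_herm, hH_sign]
  tauto
end

section
/- (Brualdi–Newman) For every n > 4, there is no symmetric circulant real Hadamard matrix of order n; that is, no circulant matrix H ∈ M_n(ℝ) with Hᵗ = H, all entries ±1, and H Hᵗ = n·I. -/
/-!
The first row `ξ` of such a matrix is a `±1`-valued even function on `ZMod n` whose periodic
autocorrelation vanishes at every nonzero shift. Writing `ξ = 1 - 2χ` with `χ` the indicator of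
the `-1` entries, the autocorrelation at `k` is `n - 4 ∑ χ + 4 r(k)` with
`r(k) = ∑ⱼ χ j χ (j - k)`, so `4 ∣ n` and `r` is constant on nonzero shifts. Since `χ` is even,
`j ↦ k - j` pairs off the terms of `r(k)`, so modulo 2 only the terms with `j + j = k` survive.
For `k = 1` there are none, hence every `r(k)` is even; for `k = d + d ≠ 0` they are `j = d` and
`j = d + n/2`, hence `ξ (d + n/2) = ξ d`. Then all but two terms of the autocorrelation at `n/2`
equal `1`, so it is at least `n - 4 > 0`.
-/

open Matrix Finset

theorem Function.Even.sum_mul_apply_sub_eq_sum_sq {G R : Type*} [AddCommGroup G] [Fintype G]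
    [DecidableEq G] [CommRing R] [CharP R 2] {f : G → R} (hf : f.Even) (k : G) :
    ∑ j, f j * f (j - k) = ∑ j with j + j = k, f j ^ 2 := by
  rw [← sum_filter_add_sum_filter_not univ (fun j => j + j = k)]
  have hfixed : ∀ j ∈ ({j | j + j = k} : Finset G), f j * f (j - k) = f j ^ 2 := by
    intro j hj
    rw [← (mem_filter.1 hj).2, show j - (j + j) = -j by abel, hf, sq]
  -- `j ↦ k - j` matches each remaining term with an equal one, and `x + x = 0` in `R`.
  have hfree : ∑ j with ¬j + j = k, f j * f (j - k) = 0 := by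
    refine sum_involution (fun j _ => k - j) (fun j _ => ?_)
      (fun j hj _ h => (mem_filter.1 hj).2 (sub_eq_iff_eq_add.1 h).symm)
      (fun j hj => ?_) (fun j _ => sub_sub_cancel k j)
    · rw [show k - j - k = -j by abel, hf, ← neg_sub, hf, mul_comm, CharTwo.add_self_eq_zero]
    · simp only [mem_filter, mem_univ, true_and] at hj ⊢
      intro h
      apply hj
      rw [← sub_eq_zero, ← neg_eq_zero, ← sub_eq_zero.2 h]
      abel
  rw [sum_congr rfl hfixed, hfree, add_zero]

theorem ZMod.add_self_eq_zero_iff {m : ℕ} [NeZero m] {x : ZMod (2 * m)} :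
    x + x = 0 ↔ x = 0 ∨ x = m := by
  constructor
  · intro h
    obtain ⟨c, hc⟩ : 2 * m ∣ x.val + x.val := by
      rw [← ZMod.natCast_eq_zero_iff, Nat.cast_add, ZMod.natCast_zmod_val, h]
    have hlt := x.val_lt
    obtain h0 | hm : x.val = 0 ∨ x.val = m := by
      rcases c with _ | _ | c <;> [omega; omega; nlinarith]
    · exact .inl ((ZMod.val_eq_zero x).1 h0)
    · exact .inr (by rw [← ZMod.natCast_zmod_val x, hm])
  · rintro (rfl | rfl)
    · exact add_zero 0
    · rw [← Nat.cast_add, ← two_mul, ZMod.natCast_self]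

theorem ZMod.natCast_ne_zero_two_mul (m : ℕ) [NeZero m] : (m : ZMod (2 * m)) ≠ 0 := by
  rw [Ne, ZMod.natCast_eq_zero_iff]
  intro h
  have := Nat.le_of_dvd (NeZero.pos m) h
  have := NeZero.ne m
  omega

theorem ZMod.add_self_ne_one {m : ℕ} (x : ZMod (2 * m)) : x + x ≠ 1 := by
  intro h
  have := congrArg (ZMod.castHom (dvd_mul_right 2 m) (ZMod 2)) h
  rw [map_add, map_one, CharTwo.add_self_eq_zero] at this
  exact zero_ne_one this

theorem sum_one_sub_two_mul_mul_one_sub_two_mul {G R : Type*} [AddCommGroup G] [Fintype G]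
    [CommRing R] (f : G → R) (k : G) :
    ∑ j, (1 - 2 * f j) * (1 - 2 * f (j - k)) =
      Fintype.card G - 4 * ∑ j, f j + 4 * ∑ j, f j * f (j - k) := by
  have hshift : ∑ j, f (j - k) = ∑ j, f j := (Equiv.subRight k).sum_comp f
  calc ∑ j, (1 - 2 * f j) * (1 - 2 * f (j - k))
      = ∑ j, (1 - 2 * f j - 2 * f (j - k) + 4 * (f j * f (j - k))) :=
        sum_congr rfl fun j _ => by ring
    _ = _ := by
        rw [sum_add_distrib, sum_sub_distrib, sum_sub_distrib, ← mul_sum, ← mul_sum, ← mul_sum,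
          hshift, sum_const, card_univ, nsmul_one]
        ring

noncomputable def negIndicator {α : Type*} (ξ : α → ℝ) (j : α) : ℤ :=
  if ξ j = 1 then 0 else 1

section SignSequence

variable {α : Type*} {ξ : α → ℝ}

theorem one_sub_two_mul_negIndicator {j : α} (hj : ξ j = 1 ∨ ξ j = -1) :
    1 - 2 * (negIndicator ξ j : ℝ) = ξ j := by
  rcases hj with h | h <;> norm_num [negIndicator, h]

theorem Function.Even.negIndicator [Neg α] (h : ξ.Even) : (_root_.negIndicator ξ).Even :=
  fun j => by simp only [_root_.negIndicator, h j]

theorem eq_of_negIndicator_cast_eq {i j : α} (hi : ξ i = 1 ∨ ξ i = -1) (hj : ξ j = 1 ∨ ξ j = -1)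
    (h : (negIndicator ξ i : ZMod 2) = negIndicator ξ j) : ξ i = ξ j := by
  rcases hi with hi | hi <;> rcases hj with hj | hj <;>
    simp_all [negIndicator]

end SignSequence

section PerfectSequence

variable {G : Type*} [AddCommGroup G] [Fintype G] {ξ : G → ℝ}

theorem sum_mul_apply_sub_eq_negIndicator (hsign : ∀ j, ξ j = 1 ∨ ξ j = -1) (k : G) :
    ∑ j, ξ j * ξ (j - k) = ((Fintype.card G - 4 * ∑ j, negIndicator ξ j +
      4 * ∑ j, negIndicator ξ j * negIndicator ξ (j - k) : ℤ) : ℝ) := by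
  simp only [← one_sub_two_mul_negIndicator (hsign _)]
  push_cast
  exact sum_one_sub_two_mul_mul_one_sub_two_mul _ k

theorem four_dvd_card_of_perfect (hsign : ∀ j, ξ j = 1 ∨ ξ j = -1)
    (hperf : ∀ k ≠ 0, ∑ j, ξ j * ξ (j - k) = 0) {k : G} (hk : k ≠ 0) :
    4 ∣ Fintype.card G := by
  have h := (sum_mul_apply_sub_eq_negIndicator hsign k).symm.trans (hperf k hk)
  norm_cast at h
  exact Int.natCast_dvd_natCast.1 ⟨∑ j, negIndicator ξ j -
    ∑ j, negIndicator ξ j * negIndicator ξ (j - k), by push_cast; linarith⟩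

theorem sum_negIndicator_mul_eq_of_perfect (hsign : ∀ j, ξ j = 1 ∨ ξ j = -1)
    (hperf : ∀ k ≠ 0, ∑ j, ξ j * ξ (j - k) = 0) {k l : G} (hk : k ≠ 0) (hl : l ≠ 0) :
    ∑ j, negIndicator ξ j * negIndicator ξ (j - k) =
      ∑ j, negIndicator ξ j * negIndicator ξ (j - l) := by
  have hk' := (sum_mul_apply_sub_eq_negIndicator hsign k).symm.trans (hperf k hk)
  have hl' := (sum_mul_apply_sub_eq_negIndicator hsign l).symm.trans (hperf l hl)
  norm_cast at hk' hl'
  linarith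

end PerfectSequence

theorem apply_add_half_eq_of_perfect {m : ℕ} [NeZero m] {ξ : ZMod (2 * m) → ℝ}
    (hsign : ∀ j, ξ j = 1 ∨ ξ j = -1) (heven : ξ.Even)
    (hperf : ∀ k ≠ 0, ∑ j, ξ j * ξ (j - k) = 0) {d : ZMod (2 * m)} (hd : d + d ≠ 0) :
    ξ (d + m) = ξ d := by
  set c : ZMod (2 * m) → ZMod 2 := fun j => (negIndicator ξ j : ZMod 2)
  have hc : c.Even := fun j => by simp only [c, heven.negIndicator j]
  have hone : (1 : ZMod (2 * m)) ≠ 0 := fun h => ZMod.add_self_ne_one 0 (by rw [add_zero, h])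
  have hsum_one : ∑ j, c j * c (j - 1) = 0 := by
    rw [hc.sum_mul_apply_sub_eq_sum_sq, filter_false_of_mem fun j _ => ZMod.add_self_ne_one j,
      sum_empty]
  have hsum_double : ∑ j, c j * c (j - (d + d)) = c d + c (d + m) := by
    have hfix : ({j | j + j = d + d} : Finset (ZMod (2 * m))) = {d, d + m} := by
      ext j
      simp only [mem_filter, mem_univ, true_and, mem_insert, mem_singleton]
      rw [← sub_eq_zero, show j + j - (d + d) = (j - d) + (j - d) by abel,
        ZMod.add_self_eq_zero_iff, sub_eq_zero, sub_eq_iff_eq_add']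
    rw [hc.sum_mul_apply_sub_eq_sum_sq, hfix,
      sum_pair (by simpa using ZMod.natCast_ne_zero_two_mul m), ZMod.pow_card, ZMod.pow_card]
  have hsum : c d + c (d + m) = 0 := by
    rw [← hsum_double, ← hsum_one]
    simpa only [c, Int.cast_sum, Int.cast_mul] using congrArg (Int.cast : ℤ → ZMod 2)
      (sum_negIndicator_mul_eq_of_perfect hsign hperf hd hone)
  exact (eq_of_negIndicator_cast_eq (hsign d) (hsign _) (CharTwo.add_eq_zero.1 hsum)).symm

theorem sub_four_le_sum_mul_apply_sub_half {m : ℕ} [NeZero m] {ξ : ZMod (2 * m) → ℝ}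
    (hsign : ∀ j, ξ j = 1 ∨ ξ j = -1) (hper : ∀ d : ZMod (2 * m), d + d ≠ 0 → ξ (d + m) = ξ d) :
    2 * (m : ℝ) - 4 ≤ ∑ j, ξ j * ξ (j - m) := by
  have hneg : -(m : ZMod (2 * m)) = m :=
    neg_eq_of_add_eq_zero_right (ZMod.add_self_eq_zero_iff.2 (.inr rfl))
  have hterm : ∀ j, 1 - 2 * (if j + j = 0 then 1 else 0 : ℝ) ≤ ξ j * ξ (j - m) := by
    intro j
    rw [sub_eq_add_neg j, hneg]
    split_ifs with hj
    · rcases hsign j with h | h <;> rcases hsign (j + m) with h' | h' <;> rw [h, h'] <;> norm_num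
    · rw [hper j hj]
      rcases hsign j with h | h <;> rw [h] <;> norm_num
  have hcard : #({j | j + j = 0} : Finset (ZMod (2 * m))) = 2 := by
    rw [show ({j | j + j = 0} : Finset (ZMod (2 * m))) = {0, (m : ZMod (2 * m))} by
        ext j; simp [ZMod.add_self_eq_zero_iff],
      card_pair (ZMod.natCast_ne_zero_two_mul m).symm]
  calc 2 * (m : ℝ) - 4 = ∑ j : ZMod (2 * m), (1 - 2 * if j + j = 0 then 1 else 0 : ℝ) := by
        rw [sum_sub_distrib, ← mul_sum, sum_boole, hcard, sum_const, card_univ, ZMod.card]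
        push_cast
        ring
    _ ≤ _ := sum_le_sum fun j _ => hterm j

theorem sign_even_perfect_of_circulant_hadamard {G : Type*} [AddCommGroup G] [Fintype G]
    [DecidableEq G] {H : Matrix G G ℝ} {ξ : G → ℝ} {c : ℝ} (hξ : ∀ i j, H i j = ξ (j - i))
    (hsym : Hᵀ = H) (hpm : ∀ i j, H i j = 1 ∨ H i j = -1) (hH : H * Hᵀ = c • 1) :
    (∀ j, ξ j = 1 ∨ ξ j = -1) ∧ ξ.Even ∧ ∀ k ≠ 0, ∑ j, ξ j * ξ (j - k) = 0 := by
  refine ⟨fun j => ?_, fun j => ?_, fun k hk => ?_⟩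
  · simpa [hξ] using hpm 0 j
  · simpa [hξ] using congrFun (congrFun hsym 0) j
  · simpa [mul_apply, hξ, one_apply, hk.symm] using congrFun (congrFun hH 0) k

/-- Brualdi–Newman: for `n > 4` there is no symmetric circulant real Hadamard matrix
of order `n`. -/
theorem no_symmetric_circulant_hadamard
    (n : ℕ) [NeZero n] (hn : 4 < n) :
    ¬ ∃ H : Matrix (ZMod n) (ZMod n) ℝ,
        (∃ ξ : ZMod n → ℝ, ∀ i j, H i j = ξ (j - i)) ∧
        Hᵀ = H ∧
        (∀ i j, H i j = 1 ∨ H i j = -1) ∧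
        H * Hᵀ = (n : ℝ) • 1 := by
  rintro ⟨H, ⟨ξ, hξ⟩, hsym, hpm, hH⟩
  obtain ⟨hsign, heven, hperf⟩ := sign_even_perfect_of_circulant_hadamard hξ hsym hpm hH
  have : Fact (1 < n) := ⟨by omega⟩
  have h4 : 4 ∣ n := by
    simpa using four_dvd_card_of_perfect hsign hperf (one_ne_zero : (1 : ZMod n) ≠ 0)
  obtain ⟨m, rfl⟩ : 2 ∣ n := dvd_trans (by norm_num) h4
  have : NeZero m := ⟨by omega⟩
  have hbound := sub_four_le_sum_mul_apply_sub_half hsign fun d hd =>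
    apply_add_half_eq_of_perfect hsign heven hperf hd
  rw [hperf _ (ZMod.natCast_ne_zero_two_mul m)] at hbound
  have : (4 : ℝ) < 2 * m := by exact_mod_cast hn
  linarith
end

section
/- Let H be a Hermitian circulant complex Hadamard matrix of order n, and write H = A + iB where A, B ∈ M_n(ℝ) are the real and imaginary parts of H. Then the matrix K = A + B satisfies K Kᵗ = n·I (i.e. K ∈ √n·O(n)), K² is symmetric, and K⁴ = n²·I. -/
open Complex Matrix

/-!
Write `H = A + iB`. Hermitian symmetry makes `A` symmetric and `B` antisymmetric, so
`Kᵀ = A - B`; circulance makes `A` and `B` commute; and `H² = HHᴴ = n·I` splits into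
`A² - B² = n·I` and `AB + BA = 0`. Hence `KKᵀ = A² - B² = n·I` and
`(K²)ᵀ = (A - B)² = (A + B)² = K²`, and then `K⁴ = K (KKᵀ) Kᵀ = n²·I`.
-/

namespace Matrix

variable {l m o : Type*}

theorem map_re_mul [Fintype m] (M : Matrix l m ℂ) (N : Matrix m o ℂ) :
    (M * N).map re = M.map re * N.map re - M.map im * N.map im := by
  ext i j
  simp [mul_apply, re_sum, Finset.sum_sub_distrib]

theorem map_im_mul [Fintype m] (M : Matrix l m ℂ) (N : Matrix m o ℂ) :
    (M * N).map im = M.map re * N.map im + M.map im * N.map re := by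
  ext i j
  simp [mul_apply, im_sum, Finset.sum_add_distrib]

theorem IsHermitian.transpose_map_re {M : Matrix m m ℂ} (hM : M.IsHermitian) :
    (M.map re)ᵀ = M.map re := by
  ext i j
  simpa using congrArg re (hM.apply i j)

theorem IsHermitian.transpose_map_im {M : Matrix m m ℂ} (hM : M.IsHermitian) :
    (M.map im)ᵀ = -M.map im := by
  ext i j
  simpa [neg_eq_iff_eq_neg] using congrArg im (hM.apply i j)

theorem commute_map_circulant {α β : Type*} [CommSemiring β] [Fintype m] [AddCommGroup m]
    (v : m → α) (f g : α → β) : Commute ((circulant v).map f) ((circulant v).map g) := by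
  rw [Commute, SemiconjBy, map_circulant, map_circulant]
  exact circulant_mul_comm _ _

variable {R : Type*} [CommRing R] [Fintype m]

theorem add_mul_transpose_add {A B : Matrix m m R} (hA : Aᵀ = A) (hB : Bᵀ = -B)
    (hAB : Commute A B) : (A + B) * (A + B)ᵀ = A * A - B * B := by
  rw [transpose_add, hA, hB, ← sub_eq_add_neg, hAB.mul_self_sub_mul_self_eq]

theorem transpose_add_mul_add {A B : Matrix m m R} (hA : Aᵀ = A) (hB : Bᵀ = -B)
    (hAB : A * B + B * A = 0) : ((A + B) * (A + B))ᵀ = (A + B) * (A + B) := by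
  rw [transpose_mul, transpose_add, hA, hB, ← sub_eq_add_neg]
  calc (A - B) * (A - B) = (A + B) * (A + B) - (A * B + B * A) - (A * B + B * A) := by
        noncomm_ring
    _ = (A + B) * (A + B) := by rw [hAB, sub_zero, sub_zero]

theorem pow_four_eq_of_mul_transpose_eq_smul_one [DecidableEq m] {K : Matrix m m R} {c : R}
    (hK : K * Kᵀ = c • 1) (hK2 : (K * K)ᵀ = K * K) : K ^ 4 = c ^ 2 • 1 := by
  calc K ^ 4 = K * (K * Kᵀ) * Kᵀ := by
        rw [Matrix.mul_assoc, Matrix.mul_assoc, ← transpose_mul, hK2]; noncomm_ring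
    _ = c ^ 2 • 1 := by
        rw [hK, Matrix.mul_smul, Matrix.mul_one, Matrix.smul_mul, hK, smul_smul, sq]

end Matrix

/-- If `H = A + iB` is a Hermitian circulant complex Hadamard matrix, then `K = A + B`
satisfies `K Kᵗ = n·I`, `K²` is symmetric, and `K⁴ = n²·I`. -/
theorem hermitian_circulant_hadamard_K
    (n : ℕ) [NeZero n] (H : Matrix (ZMod n) (ZMod n) ℂ)
    (hcirc : ∃ ξ : ZMod n → ℂ, ∀ i j, H i j = ξ (j - i))
    (hherm : Hᴴ = H) (hHad : _root_.IsHadamard H)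
    (A B : Matrix (ZMod n) (ZMod n) ℝ)
    (hA : ∀ i j, A i j = (H i j).re) (hB : ∀ i j, B i j = (H i j).im)
    (K : Matrix (ZMod n) (ZMod n) ℝ) (hK : K = A + B) :
    K * Kᵀ = (n : ℝ) • 1 ∧ (K * K)ᵀ = K * K ∧ K ^ 4 = ((n : ℝ) ^ 2) • 1 := by
  obtain ⟨ξ, hξ⟩ := hcirc
  obtain rfl : A = H.map re := ext hA
  obtain rfl : B = H.map im := ext hB
  have hH : H.IsHermitian := hherm
  have hsq : H * H = (n : ℂ) • 1 := by rw [← hHad.2, hherm]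
  have hcomm : Commute (H.map re) (H.map im) := by
    obtain rfl : H = circulant fun k => ξ (-k) := ext fun i j => by simp [hξ]
    exact commute_map_circulant _ _ _
  have hre : H.map re * H.map re - H.map im * H.map im = (n : ℝ) • 1 := by
    rw [← map_re_mul, hsq]; ext i j; by_cases h : i = j <;> simp [one_apply, h]
  have him : H.map re * H.map im + H.map im * H.map re = 0 := by
    rw [← map_im_mul, hsq]; ext i j; by_cases h : i = j <;> simp [one_apply, h]
  have hKKt : K * Kᵀ = (n : ℝ) • 1 := by
    rw [hK, add_mul_transpose_add hH.transpose_map_re hH.transpose_map_im hcomm, hre]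
  have hK2 : (K * K)ᵀ = K * K := by
    rw [hK]; exact transpose_add_mul_add hH.transpose_map_re hH.transpose_map_im him
  exact ⟨hKKt, hK2, pow_four_eq_of_mul_transpose_eq_smul_one hKKt hK2⟩
end

section
/- Let p, q be distinct primes and M ∈ M_{p+q}(ℤ/pqℤ) (indexed by ℤ/(p+q)ℤ), with L_{ij}(k) = M_{jk} − M_{ik} for i ≠ j. Suppose (P, Q, R, r) is an admissible decomposition for the pair (i,j). If a, b ∈ ℤ/(p+q)ℤ are distinct and L_{ij}(b) − L_{ij}(a) ∈ q·(ℤ/pqℤ), then a, b ∈ P⁺ = P ∪ R. -/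
/-- An admissible decomposition for the row-difference function `L = L_{ij}`:
a partition `ℤ/(p+q)ℤ = P ⊔ Q ⊔ R` and `r ∈ ℤ/pqℤ` such that `L ≡ r` on the
two-element set `R`, `L` restricted to `P` (of cardinality `p-1`) is a bijection onto
`(r + q·(ℤ/pqℤ)) \ {r}`, and `L` restricted to `Q` (of cardinality `q-1`) is a
bijection onto `(r + p·(ℤ/pqℤ)) \ {r}`. -/
def AdmissibleDecomp (p q : ℕ) [NeZero (p + q)]
    (L : ZMod (p + q) → ZMod (p * q))
    (P Q R : Finset (ZMod (p + q))) (r : ZMod (p * q)) : Prop :=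
  Disjoint P Q ∧ Disjoint P R ∧ Disjoint Q R ∧ P ∪ Q ∪ R = Finset.univ ∧
  R.card = 2 ∧ (∀ k ∈ R, L k = r) ∧
  P.card = p - 1 ∧
  Set.BijOn L ↑P (Set.range (fun t : ZMod (p * q) => r + (q : ZMod (p * q)) * t) \ {r}) ∧
  Q.card = q - 1 ∧
  Set.BijOn L ↑Q (Set.range (fun t : ZMod (p * q) => r + (p : ZMod (p * q)) * t) \ {r})

/-- In `ZMod (p*q)` with `p, q` coprime, an element that is both a multiple of `p`
and a multiple of `q` must be zero. -/
lemma zmod_zero_of_pq {p q : ℕ} (hpq : Nat.Coprime p q) {x : ZMod (p * q)}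
    (hu : ∃ u, x = (p : ZMod (p * q)) * u)
    (hv : ∃ v, x = (q : ZMod (p * q)) * v) : x = 0 := by
  obtain ⟨u, hu⟩ := hu
  obtain ⟨v, hv⟩ := hv
  have hc : IsCoprime (p : ℤ) (q : ℤ) := Int.isCoprime_iff_gcd_eq_one.mpr hpq
  obtain ⟨c, d, hcd⟩ := hc
  have h1 : ((c * p + d * q : ℤ) : ZMod (p * q)) = 1 := by rw [hcd]; simp
  have hpq0 : (p : ZMod (p * q)) * (q : ZMod (p * q)) = 0 := by
    rw [← Nat.cast_mul, ZMod.natCast_self]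
  have hpx : (p : ZMod (p * q)) * x = 0 := by
    rw [hv, ← mul_assoc, hpq0, zero_mul]
  have hqx : (q : ZMod (p * q)) * x = 0 := by
    rw [hu, ← mul_assoc, mul_comm (q : ZMod (p * q)), hpq0, zero_mul]
  have : (1 : ZMod (p * q)) * x = 0 := by
    rw [← h1]
    push_cast
    rw [add_mul, mul_assoc, mul_assoc, hpx, hqx, mul_zero, mul_zero, add_zero]
  simpa using this

/-- If `L_{ij}(b) - L_{ij}(a) ∈ q·(ℤ/pqℤ)` for distinct `a, b`, then `a, b ∈ P⁺ = P ∪ R`. -/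
theorem mem_Pplus_of_diff_in_qZ
    (p q : ℕ) (hp : p.Prime) (hq : q.Prime) (hpq : p ≠ q) [NeZero (p + q)]
    (M : Matrix (ZMod (p + q)) (ZMod (p + q)) (ZMod (p * q)))
    (i j : ZMod (p + q)) (hij : i ≠ j)
    (P Q R : Finset (ZMod (p + q))) (r : ZMod (p * q))
    (hadm : AdmissibleDecomp p q (fun k => M j k - M i k) P Q R r)
    (a b : ZMod (p + q)) (hab : a ≠ b)
    (hdiff : ∃ t : ZMod (p * q),
      (M j b - M i b) - (M j a - M i a) = (q : ZMod (p * q)) * t) :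
    a ∈ P ∪ R ∧ b ∈ P ∪ R := by
  obtain ⟨t, ht⟩ := hdiff
  obtain ⟨hPQ, hPR, hQR, huniv, hRcard, hRval, hPcard, hPbij, hQcard, hQbij⟩ := hadm
  set L : ZMod (p + q) → ZMod (p * q) := fun k => M j k - M i k with hL
  have hcop : Nat.Coprime p q := (Nat.coprime_primes hp hq).mpr hpq
  have hdiff' : L b - L a = (q : ZMod (p * q)) * t := ht
  have hQfact : ∀ k ∈ Q, (∃ u, L k - r = (p : ZMod (p * q)) * u) ∧ L k ≠ r := by
    intro k hk
    obtain ⟨⟨u, hu⟩, hne⟩ := hQbij.mapsTo (Finset.mem_coe.mpr hk)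
    exact ⟨⟨u, by rw [← hu]; ring⟩, hne⟩
  have hPRfact : ∀ k, k ∉ Q → ∃ u, L k - r = (q : ZMod (p * q)) * u := by
    intro k hk
    have hk' : k ∈ P ∪ Q ∪ R := huniv ▸ Finset.mem_univ k
    rcases Finset.mem_union.mp hk' with hk'' | hkR
    · rcases Finset.mem_union.mp hk'' with hkP | hkQ
      · obtain ⟨⟨u, hu⟩, _⟩ := hPbij.mapsTo (Finset.mem_coe.mpr hkP)
        exact ⟨u, by rw [← hu]; ring⟩
      · exact absurd hkQ hk
    · exact ⟨0, by rw [hRval k hkR]; ring⟩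
  have haQ : a ∉ Q := by
    intro haQ
    obtain ⟨⟨u, hu⟩, hne⟩ := hQfact a haQ
    by_cases hbQ : b ∈ Q
    · obtain ⟨⟨v, hv⟩, _⟩ := hQfact b hbQ
      have h0 : L b - L a = 0 := zmod_zero_of_pq hcop
        ⟨v - u, by rw [mul_sub, ← hu, ← hv]; ring⟩ ⟨t, hdiff'⟩
      exact hab (hQbij.injOn (Finset.mem_coe.mpr haQ) (Finset.mem_coe.mpr hbQ)
        (sub_eq_zero.mp h0).symm)
    · obtain ⟨v, hv⟩ := hPRfact b hbQ
      have h0 : L a - r = 0 := zmod_zero_of_pq hcop ⟨u, hu⟩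
        ⟨v - t, by rw [mul_sub, ← hv, ← hdiff']; ring⟩
      exact hne (sub_eq_zero.mp h0)
  have hbQ : b ∉ Q := by
    intro hbQ
    obtain ⟨⟨v, hv⟩, hne⟩ := hQfact b hbQ
    obtain ⟨u, hu⟩ := hPRfact a haQ
    have h0 : L b - r = 0 := zmod_zero_of_pq hcop ⟨v, hv⟩
      ⟨t + u, by rw [mul_add, ← hu, ← hdiff']; ring⟩
    exact hne (sub_eq_zero.mp h0)
  have hmem : ∀ k, k ∉ Q → k ∈ P ∪ R := by
    intro k hk
    have hk' : k ∈ P ∪ Q ∪ R := huniv ▸ Finset.mem_univ k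
    simp only [Finset.mem_union] at hk' ⊢
    tauto
  exact ⟨hmem a haQ, hmem b hbQ⟩
end

section
/- Let p, q be distinct primes and M ∈ M_{p+q}(ℤ/pqℤ) (indexed by ℤ/(p+q)ℤ), with L_{ij}(k) = M_{jk} − M_{ik} for i ≠ j. Let i, j, k be pairwise distinct indices, and suppose (P_{ij}, Q_{ij}, R_{ij}, r_{ij}), (P_{jk}, Q_{jk}, R_{jk}, r_{jk}) and (P_{ki}, Q_{ki}, R_{ki}, r_{ki}) are admissible decompositions for the pairs (i,j), (j,k) and (k,i) respectively. Then #(P_{ij} ∩ Q⁺_{jk}) ≤ 2, where Q⁺_{jk} = Q_{jk} ∪ R_{jk}. -/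
section helpers
variable {a b n : ℕ} (h : a * b = n) [NeZero n] [NeZero a] [NeZero b]

omit [NeZero a] [NeZero b] in
lemma crt_inj (hab : Nat.Coprime a b) {x y : ZMod n}
    (h1 : ZMod.castHom (h ▸ Dvd.intro b rfl : a ∣ n) (ZMod a) x =
          ZMod.castHom (h ▸ Dvd.intro b rfl : a ∣ n) (ZMod a) y)
    (h2 : ZMod.castHom (h ▸ Dvd.intro_left a rfl : b ∣ n) (ZMod b) x =
          ZMod.castHom (h ▸ Dvd.intro_left a rfl : b ∣ n) (ZMod b) y) : x = y := by
  subst h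
  have hd1 : ZMod.castHom (Dvd.intro b rfl : a ∣ a * b) (ZMod a) (x - y) = 0 := by
    rw [map_sub, h1, sub_self]
  have hd2 : ZMod.castHom (Dvd.intro_left a rfl : b ∣ a * b) (ZMod b) (x - y) = 0 := by
    rw [map_sub, h2, sub_self]
  set d := x - y with hdd
  rw [ZMod.castHom_apply, ← ZMod.natCast_val, ZMod.natCast_eq_zero_iff] at hd1 hd2
  have hn : a * b ∣ d.val := Nat.Coprime.mul_dvd_of_dvd_of_dvd hab hd1 hd2
  have h0 : d.val = 0 := Nat.eq_zero_of_dvd_of_lt hn (ZMod.val_lt d)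
  have : d = 0 := by rwa [← ZMod.val_eq_zero]
  have := sub_eq_zero.mp this
  exact this

/-- membership in the coset `r + b·(ZMod n)` is detected by cast to `ZMod b`. -/
lemma mem_coset_iff (r x : ZMod n) :
    x ∈ Set.range (fun t : ZMod n => r + (b : ZMod n) * t) ↔
      ZMod.castHom (h ▸ Dvd.intro_left a rfl : b ∣ n) (ZMod b) x =
      ZMod.castHom (h ▸ Dvd.intro_left a rfl : b ∣ n) (ZMod b) r := by
  subst h
  constructor
  · rintro ⟨t, rfl⟩
    simp [map_add, map_mul, map_natCast, ZMod.natCast_self]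
  · intro hx
    have hd : ZMod.castHom (Dvd.intro_left a rfl : b ∣ a * b) (ZMod b) (x - r) = 0 := by
      rw [map_sub, hx, sub_self]
    rw [ZMod.castHom_apply, ← ZMod.natCast_val, ZMod.natCast_eq_zero_iff] at hd
    obtain ⟨c, hc⟩ := hd
    refine ⟨(c : ZMod (a*b)), ?_⟩
    have hv : ((b * c : ℕ) : ZMod (a*b)) = x - r := by
      rw [← hc, ZMod.natCast_val, ZMod.cast_id]
    show r + (b : ZMod (a*b)) * (c : ZMod (a*b)) = x
    push_cast at hv
    linear_combination hv

end helpers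

section helpers2
variable {a b n : ℕ} (h : a * b = n) [NeZero n] [NeZero a] [NeZero b]

lemma crt_exists (hab : Nat.Coprime a b) (y : ZMod a) (w : ZMod b) :
    ∃ z : ZMod n, ZMod.castHom (h ▸ Dvd.intro b rfl : a ∣ n) (ZMod a) z = y ∧
      ZMod.castHom (h ▸ Dvd.intro_left a rfl : b ∣ n) (ZMod b) z = w := by
  obtain ⟨k, hk1, hk2⟩ := Nat.chineseRemainder hab y.val w.val
  refine ⟨(k : ZMod n), ?_, ?_⟩
  · rw [map_natCast, ZMod.natCast_eq_natCast_iff _ _ _ |>.mpr hk1, ZMod.natCast_val,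
      ZMod.cast_id]
  · rw [map_natCast, ZMod.natCast_eq_natCast_iff _ _ _ |>.mpr hk2, ZMod.natCast_val,
      ZMod.cast_id]

end helpers2

section helpers3
variable {a b n : ℕ} (h : a * b = n) [NeZero n] [NeZero a] [NeZero b]
variable {ι : Type*} [DecidableEq ι]

lemma sum_bij_side (hab : Nat.Coprime a b) (L : ι → ZMod n) (r : ZMod n) (T : Finset ι)
    (hbij : Set.BijOn L ↑T (Set.range (fun t : ZMod n => r + (b : ZMod n) * t) \ {r})) :
    ∑ x ∈ T, ZMod.castHom (h ▸ Dvd.intro b rfl : a ∣ n) (ZMod a) (L x) =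
      (∑ y : ZMod a, y) - ZMod.castHom (h ▸ Dvd.intro b rfl : a ∣ n) (ZMod a) r := by
  set φ := ZMod.castHom (h ▸ Dvd.intro b rfl : a ∣ n) (ZMod a) with hφ
  set ψ := ZMod.castHom (h ▸ Dvd.intro_left a rfl : b ∣ n) (ZMod b) with hψ
  have key : ∑ x ∈ T, φ (L x) = ∑ y ∈ Finset.univ.erase (φ r), y := by
    refine Finset.sum_bij (fun x _ => φ (L x)) ?_ ?_ ?_ (fun x hx => rfl)
    · intro x hx
      have hm := hbij.mapsTo hx
      obtain ⟨hmem, hne⟩ := hm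
      refine Finset.mem_erase.mpr ⟨?_, Finset.mem_univ _⟩
      intro heq
      exact hne (crt_inj h hab heq ((mem_coset_iff h r (L x)).mp hmem))
    · intro x₁ hx₁ x₂ hx₂ heq
      have h1 := hbij.mapsTo hx₁
      have h2 := hbij.mapsTo hx₂
      have : L x₁ = L x₂ := crt_inj h hab heq
        (((mem_coset_iff h r (L x₁)).mp h1.1).trans
          (((mem_coset_iff h r (L x₂)).mp h2.1)).symm)
      exact hbij.injOn hx₁ hx₂ this
    · intro y hy
      rw [Finset.mem_erase] at hy
      obtain ⟨z, hz1, hz2⟩ := crt_exists h hab y (ψ r)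
      have hzmem : z ∈ Set.range (fun t : ZMod n => r + (b : ZMod n) * t) \ {r} := by
        refine ⟨(mem_coset_iff h r z).mpr hz2, ?_⟩
        intro hzr
        exact hy.1 (by rw [← hz1, Set.mem_singleton_iff.mp hzr])
      obtain ⟨x, hx, hLx⟩ := hbij.surjOn hzmem
      exact ⟨x, hx, by simpa [hLx, hφ] using hz1⟩
  rw [key, Finset.sum_erase_eq_sub (Finset.mem_univ _)]

end helpers3


lemma sum_zmod_eq_zero (p : ℕ) (hp : p.Prime) (hodd : p ≠ 2) [NeZero p] : ∑ y : ZMod p, y = 0 := by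
  haveI : Fact p.Prime := ⟨hp⟩
  have h2 : (2 : ZMod p) ≠ 0 := by
    have : ((2 : ℕ) : ZMod p) = 0 ↔ p ∣ 2 := ZMod.natCast_eq_zero_iff 2 p
    intro hc
    exact hodd ((Nat.prime_dvd_prime_iff_eq hp Nat.prime_two).mp (this.mp (by exact_mod_cast hc)))
  have hneg : ∑ y : ZMod p, y = ∑ y : ZMod p, -y :=
    Fintype.sum_equiv (Equiv.neg _) _ _ (by simp)
  have : (2 : ZMod p) * ∑ y : ZMod p, y = 0 := by
    rw [two_mul]
    nth_rewrite 2 [hneg]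
    rw [← Finset.sum_add_distrib]
    simp
  rcases mul_eq_zero.mp this with h | h
  · exact absurd h h2
  · exact h
section adm
variable {p q : ℕ} (hp : p.Prime) (hq : q.Prime) [NeZero (p + q)] [NeZero p] [NeZero q]
  [NeZero (p * q)]
variable {L : ZMod (p + q) → ZMod (p * q)} {P Q R : Finset (ZMod (p + q))} {r : ZMod (p * q)}

include hp hq in
lemma admissible_sum_p (hab : Nat.Coprime p q)
    (had : AdmissibleDecomp p q L P Q R r) :
    ∑ x : ZMod (p + q), ZMod.castHom (Dvd.intro q rfl : p ∣ p * q) (ZMod p) (L x) =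
      (∑ y : ZMod p, y) + (q : ZMod p) *
        ZMod.castHom (Dvd.intro q rfl : p ∣ p * q) (ZMod p) r := by
  obtain ⟨hPQ, hPR, hQR, huniv, hRcard, hRval, hPcard, hPbij, hQcard, hQbij⟩ := had
  set φ := ZMod.castHom (Dvd.intro q rfl : p ∣ p * q) (ZMod p) with hφ
  have hsplit : ∑ x : ZMod (p + q), φ (L x) =
      (∑ x ∈ P, φ (L x)) + (∑ x ∈ Q, φ (L x)) + (∑ x ∈ R, φ (L x)) := by
    rw [← huniv, Finset.sum_union (Finset.disjoint_union_left.mpr ⟨hPR, hQR⟩), Finset.sum_union hPQ]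
  have hP : ∑ x ∈ P, φ (L x) = (∑ y : ZMod p, y) - φ r :=
    sum_bij_side rfl hab L r P hPbij
  have hQ : ∑ x ∈ Q, φ (L x) = (q - 1 : ℕ) • φ r := by
    rw [← hQcard, ← Finset.sum_const]
    apply Finset.sum_congr rfl
    intro x hx
    have hm := hQbij.mapsTo (by exact_mod_cast hx)
    exact (mem_coset_iff (mul_comm q p) r (L x)).mp hm.1
  have hR : ∑ x ∈ R, φ (L x) = 2 • φ r := by
    rw [← hRcard, ← Finset.sum_const]
    exact Finset.sum_congr rfl fun x hx => by rw [hRval x hx]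
  rw [hsplit, hP, hQ, hR]
  have hq1 : ((q - 1 : ℕ) : ZMod p) = (q : ZMod p) - 1 := by
    rw [Nat.cast_sub hq.one_lt.le]; push_cast; ring
  rw [nsmul_eq_mul, nsmul_eq_mul, hq1]
  push_cast
  ring

include hp hq in
lemma admissible_sum_q (hab : Nat.Coprime q p)
    (had : AdmissibleDecomp p q L P Q R r) :
    ∑ x : ZMod (p + q), ZMod.castHom (Dvd.intro_left p rfl : q ∣ p * q) (ZMod q) (L x) =
      (∑ y : ZMod q, y) + (p : ZMod q) *
        ZMod.castHom (Dvd.intro_left p rfl : q ∣ p * q) (ZMod q) r := by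
  obtain ⟨hPQ, hPR, hQR, huniv, hRcard, hRval, hPcard, hPbij, hQcard, hQbij⟩ := had
  set φ := ZMod.castHom (Dvd.intro_left p rfl : q ∣ p * q) (ZMod q) with hφ
  have hsplit : ∑ x : ZMod (p + q), φ (L x) =
      (∑ x ∈ P, φ (L x)) + (∑ x ∈ Q, φ (L x)) + (∑ x ∈ R, φ (L x)) := by
    rw [← huniv, Finset.sum_union (Finset.disjoint_union_left.mpr ⟨hPR, hQR⟩), Finset.sum_union hPQ]
  have hQ' : ∑ x ∈ Q, φ (L x) = (∑ y : ZMod q, y) - φ r :=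
    sum_bij_side (mul_comm q p) hab L r Q hQbij
  have hP' : ∑ x ∈ P, φ (L x) = (p - 1 : ℕ) • φ r := by
    rw [← hPcard, ← Finset.sum_const]
    apply Finset.sum_congr rfl
    intro x hx
    have hm := hPbij.mapsTo (by exact_mod_cast hx)
    exact (mem_coset_iff rfl r (L x)).mp hm.1
  have hR : ∑ x ∈ R, φ (L x) = 2 • φ r := by
    rw [← hRcard, ← Finset.sum_const]
    exact Finset.sum_congr rfl fun x hx => by rw [hRval x hx]
  rw [hsplit, hQ', hP', hR]
  have hp1 : ((p - 1 : ℕ) : ZMod q) = (p : ZMod q) - 1 := by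
    rw [Nat.cast_sub hp.one_lt.le]; push_cast; ring
  rw [nsmul_eq_mul, nsmul_eq_mul, hp1]
  push_cast
  ring

end adm

lemma sum_zmod_two : ∑ y : ZMod 2, y = 1 := by decide

lemma three_mul_one_ne_zero : (3 : ZMod 2) * 1 ≠ 0 := by decide

/-- For pairwise distinct `i, j, k`, one has `#(P_{ij} ∩ Q⁺_{jk}) ≤ 2`. -/
theorem card_P_inter_Qplus_le_two
    (p q : ℕ) (hp : p.Prime) (hq : q.Prime) (hpq : p ≠ q) [NeZero (p + q)]
    (M : Matrix (ZMod (p + q)) (ZMod (p + q)) (ZMod (p * q)))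
    (i j k : ZMod (p + q)) (hij : i ≠ j) (hjk : j ≠ k) (hki : k ≠ i)
    (Pij Qij Rij : Finset (ZMod (p + q))) (rij : ZMod (p * q))
    (hij' : AdmissibleDecomp p q (fun t => M j t - M i t) Pij Qij Rij rij)
    (Pjk Qjk Rjk : Finset (ZMod (p + q))) (rjk : ZMod (p * q))
    (hjk' : AdmissibleDecomp p q (fun t => M k t - M j t) Pjk Qjk Rjk rjk)
    (Pki Qki Rki : Finset (ZMod (p + q))) (rki : ZMod (p * q))
    (hki' : AdmissibleDecomp p q (fun t => M i t - M k t) Pki Qki Rki rki) :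
    (Pij ∩ (Qjk ∪ Rjk)).card ≤ 2 := by
  haveI : NeZero p := ⟨hp.ne_zero⟩
  haveI : NeZero q := ⟨hq.ne_zero⟩
  haveI : NeZero (p * q) := ⟨Nat.mul_ne_zero hp.ne_zero hq.ne_zero⟩
  have hab : Nat.Coprime p q := (Nat.coprime_primes hp hq).mpr hpq
  -- dispose of the case p = 2
  by_cases hp2 : p = 2
  · calc (Pij ∩ (Qjk ∪ Rjk)).card ≤ Pij.card :=
          Finset.card_le_card Finset.inter_subset_left
      _ = p - 1 := hij'.2.2.2.2.2.2.1
      _ ≤ 2 := by omega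
  -- now p is odd
  set φ := ZMod.castHom (Dvd.intro q rfl : p ∣ p * q) (ZMod p) with hφdef
  set ψ := ZMod.castHom (Dvd.intro_left p rfl : q ∣ p * q) (ZMod q) with hψdef
  set a : ZMod (p + q) → ZMod (p * q) := fun t => M j t - M i t with ha
  set b : ZMod (p + q) → ZMod (p * q) := fun t => M k t - M j t with hb
  set c : ZMod (p + q) → ZMod (p * q) := fun t => M i t - M k t with hc
  set σ := rij + rjk + rki with hσdef
  -- sum of the three functions vanishes pointwise
  have habc : ∀ t, a t + b t + c t = 0 := fun t => by simp only [ha, hb, hc]; ring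
  -- the sum relation mod p
  have hrelp : (3 : ZMod p) * (∑ y : ZMod p, y) + (q : ZMod p) * φ σ = 0 := by
    have h1 := admissible_sum_p hp hq hab hij'
    have h2 := admissible_sum_p hp hq hab hjk'
    have h3 := admissible_sum_p hp hq hab hki'
    have h0 : (∑ x : ZMod (p + q), φ (a x)) + (∑ x : ZMod (p + q), φ (b x))
        + (∑ x : ZMod (p + q), φ (c x)) = 0 := by
      rw [← Finset.sum_add_distrib, ← Finset.sum_add_distrib]
      apply Finset.sum_eq_zero
      intro x _
      rw [← map_add, ← map_add, habc x, map_zero]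
    rw [h1, h2, h3] at h0
    rw [hσdef]
    push_cast [map_add]
    linear_combination h0
  -- ∑ y : ZMod p = 0 since p is odd
  have hSp : (∑ y : ZMod p, y) = 0 := sum_zmod_eq_zero p hp hp2
  -- q is invertible mod p
  have hqp : (q : ZMod p) ≠ 0 := by
    intro h0
    rw [ZMod.natCast_eq_zero_iff] at h0
    exact hpq ((Nat.prime_dvd_prime_iff_eq hp hq).mp h0)
  haveI : Fact p.Prime := ⟨hp⟩
  have hσp : φ σ = 0 := by
    rw [hSp, mul_zero, zero_add] at hrelp
    rcases mul_eq_zero.mp hrelp with h0 | h0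
    · exact absurd h0 hqp
    · exact h0
  -- the sum relation mod q
  haveI : Fact q.Prime := ⟨hq⟩
  have hrelq : (3 : ZMod q) * (∑ y : ZMod q, y) + (p : ZMod q) * ψ σ = 0 := by
    have h1 := admissible_sum_q hp hq hab.symm hij'
    have h2 := admissible_sum_q hp hq hab.symm hjk'
    have h3 := admissible_sum_q hp hq hab.symm hki'
    have h0 : (∑ x : ZMod (p + q), ψ (a x)) + (∑ x : ZMod (p + q), ψ (b x))
        + (∑ x : ZMod (p + q), ψ (c x)) = 0 := by
      rw [← Finset.sum_add_distrib, ← Finset.sum_add_distrib]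
      apply Finset.sum_eq_zero
      intro x _
      rw [← map_add, ← map_add, habc x, map_zero]
    rw [h1, h2, h3] at h0
    rw [hσdef]
    push_cast [map_add]
    linear_combination h0
  -- unpack the three decompositions
  obtain ⟨hPQ1, hPR1, hQR1, huniv1, hRcard1, hRval1, hPcard1, hPbij1, hQcard1, hQbij1⟩ := hij'
  obtain ⟨hPQ2, hPR2, hQR2, huniv2, hRcard2, hRval2, hPcard2, hPbij2, hQcard2, hQbij2⟩ := hjk'
  obtain ⟨hPQ3, hPR3, hQR3, huniv3, hRcard3, hRval3, hPcard3, hPbij3, hQcard3, hQbij3⟩ := hki'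
  -- basic residue facts
  have fact1 : ∀ x ∈ Pij, ψ (a x) = ψ rij ∧ a x ≠ rij := by
    intro x hx
    have hm := hPbij1.mapsTo (Finset.mem_coe.mpr hx)
    exact ⟨(mem_coset_iff rfl rij (a x)).mp hm.1, hm.2⟩
  have fact2 : ∀ x ∈ Qjk ∪ Rjk, φ (b x) = φ rjk := by
    intro x hx
    rcases Finset.mem_union.mp hx with h' | h'
    · have hm := hQbij2.mapsTo (Finset.mem_coe.mpr h')
      exact (mem_coset_iff (mul_comm q p) rjk (b x)).mp hm.1
    · rw [hRval2 x h']
  have fact3 : ∀ x ∈ Qki ∪ Rki, φ (c x) = φ rki := by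
    intro x hx
    rcases Finset.mem_union.mp hx with h' | h'
    · have hm := hQbij3.mapsTo (Finset.mem_coe.mpr h')
      exact (mem_coset_iff (mul_comm q p) rki (c x)).mp hm.1
    · rw [hRval3 x h']
  have fact4 : ∀ x ∈ Pki, ψ (c x) = ψ rki := by
    intro x hx
    have hm := hPbij3.mapsTo (Finset.mem_coe.mpr hx)
    exact (mem_coset_iff rfl rki (c x)).mp hm.1
  have fact5 : ∀ x ∈ Qjk, b x ≠ rjk := by
    intro x hx
    exact (hQbij2.mapsTo (Finset.mem_coe.mpr hx)).2
  have hφσ' : φ rij + φ rjk + φ rki = 0 := by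
    rw [← map_add, ← map_add]; exact hσp
  -- Claim A : the intersection is contained in Pki
  have hA : ∀ x ∈ Pij ∩ (Qjk ∪ Rjk), x ∈ Pki := by
    intro x hx
    rw [Finset.mem_inter] at hx
    have hxuniv : x ∈ Pki ∪ Qki ∪ Rki := huniv3 ▸ Finset.mem_univ x
    have hQR : x ∈ Qki ∪ Rki → False := by
      intro h'
      have hφc : φ (c x) = φ rki := fact3 x h'
      have hφb : φ (b x) = φ rjk := fact2 x hx.2
      have h0 : φ (a x) + φ (b x) + φ (c x) = 0 := by
        rw [← map_add, ← map_add, habc, map_zero]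
      have hφa : φ (a x) = φ rij := by linear_combination h0 - hφσ' - hφb - hφc
      have : a x = rij := crt_inj rfl hab hφa (fact1 x hx.1).1
      exact (fact1 x hx.1).2 this
    rcases Finset.mem_union.mp hxuniv with h' | h'
    · rcases Finset.mem_union.mp h' with h'' | h''
      · exact h''
      · exact absurd (Finset.mem_union_left _ h'') (fun hh => hQR hh)
    · exact absurd (Finset.mem_union_right _ h') (fun hh => hQR hh)
  -- the b-values on the intersection
  have hψσ' : ψ rij + ψ rjk + ψ rki = ψ σ := by
    rw [← map_add, ← map_add]
  have hψb : ∀ x ∈ Pij ∩ (Qjk ∪ Rjk), ψ (b x) = ψ rjk - ψ σ := by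
    intro x hx
    have hx' := Finset.mem_inter.mp hx
    have h0 : ψ (a x) + ψ (b x) + ψ (c x) = 0 := by
      rw [← map_add, ← map_add, habc, map_zero]
    have h1 := (fact1 x hx'.1).1
    have h2 := fact4 x (hA x hx)
    linear_combination h0 - h1 - h2 - hψσ'
  by_cases hq2 : q = 2
  · -- q = 2 : the intersection injects into Qjk via b, so has at most one element
    have hSq : (∑ y : ZMod q, y) = 1 := by subst hq2; exact sum_zmod_two
    have hψσ : ψ σ ≠ 0 := by
      intro h0
      rw [hSq, h0, mul_one, mul_zero, add_zero] at hrelq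
      subst hq2
      exact three_mul_one_ne_zero hrelq
    have hsub : Pij ∩ (Qjk ∪ Rjk) ⊆ Qjk := by
      intro x hx
      have hx' := Finset.mem_inter.mp hx
      rcases Finset.mem_union.mp hx'.2 with h' | h'
      · exact h'
      · exfalso
        have h1 := hψb x hx
        rw [hRval2 x h'] at h1
        exact hψσ (by linear_combination h1)
    have hone : (Pij ∩ (Qjk ∪ Rjk)).card ≤ 1 := by
      rw [Finset.card_le_one]
      intro x hx y hy
      have hbxy : b x = b y := by
        apply crt_inj rfl hab
        · rw [fact2 x (Finset.mem_inter.mp hx).2, fact2 y (Finset.mem_inter.mp hy).2]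
        · rw [hψb x hx, hψb y hy]
      exact hQbij2.injOn (Finset.mem_coe.mpr (hsub hx)) (Finset.mem_coe.mpr (hsub hy)) hbxy
    omega
  · -- q odd : the intersection is contained in Rjk
    have hSq : (∑ y : ZMod q, y) = 0 := sum_zmod_eq_zero q hq hq2
    have hpq' : (p : ZMod q) ≠ 0 := by
      intro h0
      rw [ZMod.natCast_eq_zero_iff] at h0
      exact hpq ((Nat.prime_dvd_prime_iff_eq hq hp).mp h0).symm
    have hψσ : ψ σ = 0 := by
      rw [hSq, mul_zero, zero_add] at hrelq
      rcases mul_eq_zero.mp hrelq with h0 | h0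
      · exact absurd h0 hpq'
      · exact h0
    have hsub : Pij ∩ (Qjk ∪ Rjk) ⊆ Rjk := by
      intro x hx
      have hx' := Finset.mem_inter.mp hx
      have hbx : b x = rjk := by
        apply crt_inj rfl hab
        · exact fact2 x hx'.2
        · rw [hψb x hx, hψσ, sub_zero]
      rcases Finset.mem_union.mp hx'.2 with h' | h'
      · exact absurd hbx (fact5 x h')
      · exact h'
    calc (Pij ∩ (Qjk ∪ Rjk)).card ≤ Rjk.card := Finset.card_le_card hsub
      _ = 2 := hRcard2
end

section
/- Let p, q be distinct primes with p ≥ 5, and let M ∈ M_{p+q}(ℤ/pqℤ) (indexed by ℤ/(p+q)ℤ), with L_{ij}(k) = M_{jk} − M_{ik} for i ≠ j. Let i, j, k be pairwise distinct indices, and suppose admissible decompositions are given for the pairs (i,j), (j,k) and (k,i). Then #(P_{ij} ∩ P_{jk}) ≥ 2. -/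
lemma zmod_cast_zero {p q : ℕ} (hp : p.Prime) (hq : q.Prime) (hpq : p ≠ q)
    (y : ZMod (p * q))
    (h1 : ZMod.castHom (Dvd.intro q rfl) (ZMod p) y = 0)
    (h2 : ZMod.castHom (Dvd.intro_left p rfl) (ZMod q) y = 0) : y = 0 := by
  haveI : NeZero (p * q) := ⟨Nat.mul_ne_zero hp.ne_zero hq.ne_zero⟩
  have hy : y = ((y.val : ℕ) : ZMod (p * q)) := (ZMod.natCast_zmod_val y).symm
  rw [ZMod.castHom_apply, ← ZMod.natCast_val, ZMod.natCast_eq_zero_iff] at h1 h2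
  have := (Nat.Coprime.mul_dvd_of_dvd_of_dvd ((Nat.coprime_primes hp hq).mpr hpq) h1 h2)
  rw [hy, ZMod.natCast_eq_zero_iff]
  exact this

lemma zmod_q_mul {p q : ℕ} (hp : p.Prime) (hq : q.Prime) (hpq : p ≠ q)
    (t : ZMod (p * q))
    (h1 : ZMod.castHom (Dvd.intro q rfl) (ZMod p) ((q : ZMod (p*q)) * t) = 0) :
    (q : ZMod (p*q)) * t = 0 := by
  apply zmod_cast_zero hp hq hpq _ h1
  rw [map_mul, map_natCast, ZMod.natCast_self, zero_mul]

lemma zmod_sum_zero (p : ℕ) (hp : p.Prime) (hodd : p ≠ 2) [NeZero p] :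
    ∑ v : ZMod p, v = 0 := by
  haveI : Fact p.Prime := ⟨hp⟩
  have h : ∑ v : ZMod p, v = ∑ v : ZMod p, -v := Fintype.sum_equiv (Equiv.neg _) _ _ (by simp)
  have h2 : (2 : ZMod p) * ∑ v : ZMod p, v = 0 := by
    rw [two_mul]; nth_rewrite 2 [h]; rw [← Finset.sum_add_distrib]; simp
  have h2' : ((2:ℕ) : ZMod p) ≠ 0 := by
    intro hz
    rw [ZMod.natCast_eq_zero_iff] at hz
    revert hz; intro hdvd
    exact hodd ((Nat.prime_dvd_prime_iff_eq hp Nat.prime_two).mp hdvd)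
  have : (2 : ZMod p) ≠ 0 := by exact_mod_cast h2'
  exact (mul_eq_zero.mp h2).resolve_left this

lemma decomp_facts {p q : ℕ} [NeZero (p+q)] (hp : p.Prime) (hq : q.Prime) (hpq : p ≠ q)
    (hp5 : 5 ≤ p)
    (L : ZMod (p+q) → ZMod (p*q)) (P Q R : Finset (ZMod (p+q))) (r : ZMod (p*q))
    (h : AdmissibleDecomp p q L P Q R r) :
    (∀ t, t ∈ Q ∪ R ↔ ZMod.castHom (Dvd.intro q rfl) (ZMod p) (L t)
        = ZMod.castHom (Dvd.intro q rfl) (ZMod p) r) ∧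
    (Q ∪ R).card = q + 1 ∧ P = (Q ∪ R)ᶜ ∧
    ∑ t, ZMod.castHom (Dvd.intro q rfl) (ZMod p) (L t)
      = (q : ZMod p) * ZMod.castHom (Dvd.intro q rfl) (ZMod p) r := by
  haveI : NeZero p := ⟨hp.pos.ne'⟩
  obtain ⟨hPQ, hPR, hQR, huniv, hR2, hRval, hPcard, hPbij, hQcard, hQbij⟩ := h
  set π : ZMod (p*q) →+* ZMod p := ZMod.castHom (Dvd.intro q rfl) (ZMod p) with hπ
  have hPval : ∀ t ∈ P, π (L t) ≠ π r := by
    intro t ht heq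
    obtain ⟨⟨s, hs⟩, hne⟩ := hPbij.mapsTo ht
    have hLt : L t = r + (q : ZMod (p*q)) * s := hs.symm
    have h0 : π ((q : ZMod (p*q)) * s) = 0 := by
      rw [hLt, map_add] at heq
      exact add_eq_left.mp heq
    have hz := zmod_q_mul hp hq hpq s h0
    apply hne
    rw [← hs]
    simp only [Set.mem_singleton_iff, hz, add_zero]
  have hQval : ∀ t ∈ Q, π (L t) = π r := by
    intro t ht
    obtain ⟨⟨s, hs⟩, hne⟩ := hQbij.mapsTo ht
    rw [← hs, map_add, map_mul, map_natCast, ZMod.natCast_self, zero_mul, add_zero]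
  have hcompl : P = (Q ∪ R)ᶜ := by
    ext t
    simp only [Finset.mem_compl, Finset.mem_union]
    constructor
    · intro ht
      push_neg
      exact ⟨fun hQ => (Finset.disjoint_left.mp hPQ) ht hQ,
             fun hR => (Finset.disjoint_left.mp hPR) ht hR⟩
    · intro ht
      have : t ∈ P ∪ Q ∪ R := huniv ▸ Finset.mem_univ t
      push_neg at ht
      rcases Finset.mem_union.mp this with h' | h'
      · rcases Finset.mem_union.mp h' with h'' | h''
        · exact h''
        · exact absurd h'' ht.1
      · exact absurd h' ht.2
  have hmem : ∀ t, t ∈ Q ∪ R ↔ π (L t) = π r := by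
    intro t
    constructor
    · intro ht
      rcases Finset.mem_union.mp ht with h' | h'
      · exact hQval t h'
      · rw [hRval t h']
    · intro hval
      by_contra hnot
      have : t ∈ P := by rw [hcompl]; exact Finset.mem_compl.mpr hnot
      exact hPval t this hval
  have hcard : (Q ∪ R).card = q + 1 := by
    rw [Finset.card_union_of_disjoint hQR, hQcard, hR2]
    have := hq.two_le
    omega
  refine ⟨hmem, hcard, hcompl, ?_⟩
  -- the sum
  have hsplit : ∑ t, π (L t) = ∑ t ∈ Q ∪ R, π (L t) + ∑ t ∈ P, π (L t) := by
    rw [hcompl, Finset.sum_add_sum_compl]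
  have hs1 : ∑ t ∈ Q ∪ R, π (L t) = (q + 1) • π r := by
    rw [Finset.sum_congr rfl (fun t ht => (hmem t).mp ht), Finset.sum_const, hcard]
  have hinj : Set.InjOn (fun t => π (L t)) ↑P := by
    intro t ht t' ht' heq
    simp only at heq
    obtain ⟨⟨s, hs⟩, -⟩ := hPbij.mapsTo ht
    obtain ⟨⟨s', hs'⟩, -⟩ := hPbij.mapsTo ht'
    have hdiff : (q : ZMod (p*q)) * (s - s') = L t - L t' := by
      rw [← hs, ← hs']; ring
    have hd : π ((q : ZMod (p*q)) * (s - s')) = 0 := by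
      rw [hdiff, map_sub, heq, sub_self]
    have hz := zmod_q_mul hp hq hpq _ hd
    have hLL : L t = L t' := by
      have h0 : L t - L t' = 0 := by rw [← hdiff, hz]
      exact sub_eq_zero.mp h0
    exact hPbij.injOn ht ht' hLL
  have himg : P.image (fun t => π (L t)) = Finset.univ.erase (π r) := by
    apply Finset.eq_of_subset_of_card_le
    · intro v hv
      obtain ⟨t, ht, rfl⟩ := Finset.mem_image.mp hv
      exact Finset.mem_erase.mpr ⟨hPval t ht, Finset.mem_univ _⟩
    · rw [Finset.card_erase_of_mem (Finset.mem_univ _), Finset.card_univ, ZMod.card,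
        Finset.card_image_of_injOn hinj, hPcard]
  have hs2 : ∑ t ∈ P, π (L t) = - π r := by
    have himg2 : ∑ v ∈ P.image (fun t => π (L t)), v = ∑ t ∈ P, π (L t) :=
      Finset.sum_image (fun x hx y hy hxy => hinj hx hy hxy)
    rw [← himg2, himg, Finset.sum_erase_eq_sub (Finset.mem_univ _),
      zmod_sum_zero p hp (by omega), zero_sub]
  rw [hsplit, hs1, hs2, nsmul_eq_mul]
  push_cast
  ring


/-- For `p ≥ 5` and pairwise distinct `i, j, k`, one has `#(P_{ij} ∩ P_{jk}) ≥ 2`. -/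
theorem two_le_card_P_inter_P
    (p q : ℕ) (hp : p.Prime) (hq : q.Prime) (hpq : p ≠ q) (hp5 : 5 ≤ p) [NeZero (p + q)]
    (M : Matrix (ZMod (p + q)) (ZMod (p + q)) (ZMod (p * q)))
    (i j k : ZMod (p + q)) (hij : i ≠ j) (hjk : j ≠ k) (hki : k ≠ i)
    (Pij Qij Rij : Finset (ZMod (p + q))) (rij : ZMod (p * q))
    (hij' : AdmissibleDecomp p q (fun t => M j t - M i t) Pij Qij Rij rij)
    (Pjk Qjk Rjk : Finset (ZMod (p + q))) (rjk : ZMod (p * q))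
    (hjk' : AdmissibleDecomp p q (fun t => M k t - M j t) Pjk Qjk Rjk rjk)
    (Pki Qki Rki : Finset (ZMod (p + q))) (rki : ZMod (p * q))
    (hki' : AdmissibleDecomp p q (fun t => M i t - M k t) Pki Qki Rki rki) :
    2 ≤ (Pij ∩ Pjk).card := by
  haveI : NeZero p := ⟨hp.pos.ne'⟩
  haveI : Fact p.Prime := ⟨hp⟩
  set π : ZMod (p*q) →+* ZMod p := ZMod.castHom (Dvd.intro q rfl) (ZMod p) with hπ
  obtain ⟨memA, cardA, complA, sumA⟩ := decomp_facts hp hq hpq hp5 _ _ _ _ _ hij'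
  obtain ⟨memB, cardB, complB, sumB⟩ := decomp_facts hp hq hpq hp5 _ _ _ _ _ hjk'
  obtain ⟨memC, cardC, complC, sumC⟩ := decomp_facts hp hq hpq hp5 _ _ _ _ _ hki'
  set A := Qij ∪ Rij with hA
  set B := Qjk ∪ Rjk with hB
  set C := Qki ∪ Rki with hC
  -- rij + rjk + rki ≡ 0 (mod p)
  have hqne : (q : ZMod p) ≠ 0 := by
    rw [Ne, ZMod.natCast_eq_zero_iff]
    exact fun hd => hpq ((Nat.prime_dvd_prime_iff_eq hp hq).mp hd)
  have habc : π rij + π rjk + π rki = 0 := by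
    have hzero : ∑ t, (π (M j t - M i t) + π (M k t - M j t) + π (M i t - M k t)) = 0 := by
      apply Finset.sum_eq_zero
      intro t _
      have h0 : (M j t - M i t) + (M k t - M j t) + (M i t - M k t) = 0 := by ring
      rw [← map_add, ← map_add, h0, map_zero]
    rw [Finset.sum_add_distrib, Finset.sum_add_distrib, sumA, sumB, sumC, ← mul_add,
      ← mul_add] at hzero
    exact (mul_eq_zero.mp hzero).resolve_left hqne
  -- pairwise intersection relations
  have keyAB : ∀ t, t ∈ A → t ∈ B → t ∈ C := by
    intro t hA' hB'
    apply (memC t).mpr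
    have ha := (memA t).mp hA'
    have hb := (memB t).mp hB'
    have h0 : M i t - M k t = -((M j t - M i t) + (M k t - M j t)) := by ring
    rw [h0, map_neg, map_add, ha, hb]
    linear_combination -habc
  have keyAC : ∀ t, t ∈ A → t ∈ C → t ∈ B := by
    intro t hA' hC'
    apply (memB t).mpr
    have ha := (memA t).mp hA'
    have hc := (memC t).mp hC'
    have h0 : M k t - M j t = -((M j t - M i t) + (M i t - M k t)) := by ring
    rw [h0, map_neg, map_add, ha, hc]
    linear_combination -habc
  have keyBC : ∀ t, t ∈ B → t ∈ C → t ∈ A := by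
    intro t hB' hC'
    apply (memA t).mpr
    have hb := (memB t).mp hB'
    have hc := (memC t).mp hC'
    have h0 : M j t - M i t = -((M k t - M j t) + (M i t - M k t)) := by ring
    rw [h0, map_neg, map_add, hb, hc]
    linear_combination -habc
  -- cardinality bookkeeping
  have hAB : A ∩ B = A ∩ B ∩ C := by
    ext t
    simp only [Finset.mem_inter]
    exact ⟨fun ⟨h1, h2⟩ => ⟨⟨h1, h2⟩, keyAB t h1 h2⟩, fun ⟨h1, _⟩ => h1⟩
  have hACBC : (A ∪ B) ∩ C = A ∩ B ∩ C := by
    ext t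
    simp only [Finset.mem_inter, Finset.mem_union]
    constructor
    · rintro ⟨h1 | h1, h2⟩
      · exact ⟨⟨h1, keyAC t h1 h2⟩, h2⟩
      · exact ⟨⟨keyBC t h1 h2, h1⟩, h2⟩
    · rintro ⟨⟨h1, _⟩, h3⟩
      exact ⟨Or.inl h1, h3⟩
  have e1 : (A ∪ B).card + (A ∩ B ∩ C).card = A.card + B.card := by
    rw [← hAB]; exact Finset.card_union_add_card_inter A B
  have e2 : ((A ∪ B) ∪ C).card + (A ∩ B ∩ C).card = (A ∪ B).card + C.card := by
    rw [← hACBC]; exact Finset.card_union_add_card_inter _ _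
  have e3 : ((A ∪ B) ∪ C).card ≤ p + q := by
    calc ((A ∪ B) ∪ C).card ≤ Finset.univ.card := Finset.card_le_univ _
    _ = p + q := by rw [Finset.card_univ, ZMod.card]
  have hfinal : (Pij ∩ Pjk).card = (p + q) - (A ∪ B).card := by
    rw [complA, complB, ← Finset.compl_union, Finset.card_compl, ZMod.card]
  have e4 : (A ∪ B).card ≤ p + q := by
    calc (A ∪ B).card ≤ Finset.univ.card := Finset.card_le_univ _
    _ = p + q := by rw [Finset.card_univ, ZMod.card]
  rw [hfinal]
  omega
end

section
/- Let p, q be distinct primes with p, q ≥ 5, and let M ∈ M_{p+q}(ℤ/pqℤ) (indexed by ℤ/(p+q)ℤ), with L_{ij}(k) = M_{jk} − M_{ik} for i ≠ j. Suppose that for every ordered pair of distinct indices an admissible decomposition (P_{ij}, Q_{ij}, R_{ij}, r_{ij}) is given. Then for all indices i ≠ j and k ≠ l (the pairs not necessarily distinct), one has #(P_{ij} ∩ P_{kl}) ≥ p − 3 and #(Q_{ij} ∩ Q_{kl}) ≥ q − 3. -/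
open Finset

lemma zmod_sum_univ_eq_zero (d : ℕ) [NeZero d] (hd : d.Prime) (hd2 : d ≠ 2) :
    ∑ x : ZMod d, x = 0 := by
  haveI : Fact d.Prime := ⟨hd⟩
  have h : ∑ x : ZMod d, x = ∑ x : ZMod d, -x :=
    Fintype.sum_equiv (Equiv.neg (ZMod d)) _ _ (fun x => (neg_neg x).symm)
  have h2 : (2 : ZMod d) * ∑ x : ZMod d, x = 0 := by
    rw [two_mul]
    nth_rewrite 2 [h]
    rw [← Finset.sum_add_distrib]
    simp
  have hne : (2 : ZMod d) ≠ 0 := by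
    have : ((2 : ℕ) : ZMod d) ≠ 0 := by
      rw [Ne, ZMod.natCast_eq_zero_iff]
      intro hdvd
      exact hd2 ((Nat.prime_dvd_prime_iff_eq hd Nat.prime_two).mp hdvd)
    simpa using this
  rcases mul_eq_zero.mp h2 with h' | h'
  · exact absurd h' hne
  · exact h'

lemma side_lemma {n : ℕ} [NeZero n] {c d : ℕ} (hc : c.Prime) (hd : d.Prime) (hcd : c ≠ d)
    (hd2 : d ≠ 2) (hn : n = c * d) (hdn : d ∣ n)
    {X : Type*} [Fintype X] [DecidableEq X]
    (L : X → ZMod n) (P Q R : Finset X) (r : ZMod n)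
    (hPQ : Disjoint P Q) (hPR : Disjoint P R) (hQR : Disjoint Q R)
    (huniv : P ∪ Q ∪ R = Finset.univ)
    (hRcard : R.card = 2) (hRval : ∀ k ∈ R, L k = r)
    (hPcard : P.card = c - 1)
    (hPbij : Set.BijOn L ↑P (Set.range (fun t : ZMod n => r + (d : ZMod n) * t) \ {r}))
    (hQcard : Q.card = d - 1)
    (hQbij : Set.BijOn L ↑Q (Set.range (fun t : ZMod n => r + (c : ZMod n) * t) \ {r})) :
    (∀ t ∈ P, ZMod.castHom hdn (ZMod d) (L t) = ZMod.castHom hdn (ZMod d) r) ∧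
    (∀ t ∈ Q, ZMod.castHom hdn (ZMod d) (L t) ≠ ZMod.castHom hdn (ZMod d) r) ∧
    (∀ t ∈ R, ZMod.castHom hdn (ZMod d) (L t) = ZMod.castHom hdn (ZMod d) r) ∧
    (∑ t, ZMod.castHom hdn (ZMod d) (L t)
      = (c : ZMod d) * ZMod.castHom hdn (ZMod d) r) := by
  haveI : NeZero d := ⟨hd.ne_zero⟩
  set φ := ZMod.castHom hdn (ZMod d) with hφdef
  have hφd : ∀ s : ZMod n, φ ((d : ZMod n) * s) = 0 := by
    intro s
    rw [map_mul, map_natCast, ZMod.natCast_self, zero_mul]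
  have hinj0 : ∀ s : ZMod n, φ ((c : ZMod n) * s) = 0 → (c : ZMod n) * s = 0 := by
    intro s h
    set x := (c : ZMod n) * s with hx
    have hdvd_d : d ∣ x.val := by
      have h1 : φ x = ((x.val : ℕ) : ZMod d) := by
        rw [hφdef, ZMod.castHom_apply, ZMod.cast_eq_val]
      rw [h1] at h
      exact (ZMod.natCast_eq_zero_iff _ _).mp h
    have hc_lt : c < n := by
      rw [hn]
      have h1 : 1 < d := hd.one_lt
      have h0 : 0 < c := hc.pos
      nlinarith
    have hdvd_c : c ∣ x.val := by
      have hval : x.val = c * s.val % n := by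
        rw [hx, ZMod.val_mul, ZMod.val_natCast_of_lt hc_lt]
      rw [hval]
      have hcn : c ∣ n := by rw [hn]; exact dvd_mul_right c d
      exact (Nat.dvd_mod_iff hcn).mpr (dvd_mul_right c s.val)
    have hcop : Nat.Coprime c d := (Nat.coprime_primes hc hd).mpr hcd
    have hmul : c * d ∣ x.val := Nat.Coprime.mul_dvd_of_dvd_of_dvd hcop hdvd_c hdvd_d
    have hlt2 : x.val < c * d := lt_of_lt_of_eq (ZMod.val_lt x) hn
    exact (ZMod.val_eq_zero x).mp (Nat.eq_zero_of_dvd_of_lt hmul hlt2)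
  have hP1 : ∀ t ∈ P, φ (L t) = φ r := by
    intro t ht
    obtain ⟨⟨s, hs⟩, -⟩ := hPbij.mapsTo (Finset.mem_coe.mpr ht)
    rw [← hs, map_add, hφd, add_zero]
  have hR1 : ∀ t ∈ R, φ (L t) = φ r := by
    intro t ht; rw [hRval t ht]
  have hQ1 : ∀ t ∈ Q, φ (L t) ≠ φ r := by
    intro t ht heq
    obtain ⟨⟨s, hs⟩, hne⟩ := hQbij.mapsTo (Finset.mem_coe.mpr ht)
    have h0 : φ ((c : ZMod n) * s) = 0 := by
      have h' : φ (L t) = φ r + φ ((c : ZMod n) * s) := by rw [← hs, map_add]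
      rw [heq] at h'
      exact (left_eq_add.mp h')
    have hz := hinj0 s h0
    apply hne
    simp only [Set.mem_singleton_iff]
    rw [← hs]
    show r + (c : ZMod n) * s = r
    rw [hz, add_zero]
  refine ⟨hP1, hQ1, hR1, ?_⟩
  -- the sum identity
  have hinjQ : ∀ x ∈ Q, ∀ y ∈ Q, φ (L x) = φ (L y) → x = y := by
    intro x hx y hy hxy
    obtain ⟨⟨s, hs⟩, -⟩ := hQbij.mapsTo (Finset.mem_coe.mpr hx)
    obtain ⟨⟨s', hs'⟩, -⟩ := hQbij.mapsTo (Finset.mem_coe.mpr hy)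
    have h0 : φ ((c : ZMod n) * (s - s')) = 0 := by
      have : (c : ZMod n) * (s - s') = L x - L y := by rw [← hs, ← hs']; ring
      rw [this, map_sub, hxy, sub_self]
    have h1 : (c : ZMod n) * (s - s') = 0 := hinj0 _ h0
    have h2 : L x = L y := by
      rw [← hs, ← hs']
      have h3 : (c : ZMod n) * s = (c : ZMod n) * s' := by
        have h4 := h1
        rw [mul_sub, sub_eq_zero] at h4
        exact h4
      show r + (c : ZMod n) * s = r + (c : ZMod n) * s'
      rw [h3]
    exact hQbij.injOn (Finset.mem_coe.mpr hx) (Finset.mem_coe.mpr hy) h2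
  have himage : Q.image (fun t => φ (L t)) = Finset.univ.erase (φ r) := by
    apply Finset.eq_of_subset_of_card_le
    · intro y hy
      obtain ⟨t, ht, rfl⟩ := Finset.mem_image.mp hy
      exact Finset.mem_erase.mpr ⟨hQ1 t ht, Finset.mem_univ _⟩
    · rw [Finset.card_erase_of_mem (Finset.mem_univ _), Finset.card_univ, ZMod.card,
        Finset.card_image_of_injOn (fun x hx y hy => hinjQ x hx y hy), hQcard]
  have hsumQ : ∑ t ∈ Q, φ (L t) = - φ r := by
    have h1 : ∑ y ∈ Q.image (fun t => φ (L t)), y = ∑ t ∈ Q, φ (L t) :=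
      Finset.sum_image hinjQ
    rw [himage] at h1
    rw [← h1, Finset.sum_erase_eq_sub (Finset.mem_univ _),
      zmod_sum_univ_eq_zero d hd hd2, zero_sub]
  have hsumP : ∑ t ∈ P, φ (L t) = (c - 1 : ℕ) • φ r := by
    rw [Finset.sum_congr rfl hP1, Finset.sum_const, hPcard]
  have hsumR : ∑ t ∈ R, φ (L t) = 2 • φ r := by
    rw [Finset.sum_congr rfl hR1, Finset.sum_const, hRcard]
  have hdisj : Disjoint (P ∪ Q) R := Finset.disjoint_union_left.mpr ⟨hPR, hQR⟩
  calc ∑ t, φ (L t) = ∑ t ∈ P ∪ Q ∪ R, φ (L t) := by rw [huniv]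
    _ = ∑ t ∈ P ∪ Q, φ (L t) + ∑ t ∈ R, φ (L t) := Finset.sum_union hdisj
    _ = (∑ t ∈ P, φ (L t) + ∑ t ∈ Q, φ (L t)) + ∑ t ∈ R, φ (L t) := by
        rw [Finset.sum_union hPQ]
    _ = ((c - 1 : ℕ) • φ r + (- φ r)) + 2 • φ r := by rw [hsumP, hsumQ, hsumR]
    _ = (c : ZMod d) * φ r := by
        rw [nsmul_eq_mul, nsmul_eq_mul, Nat.cast_sub hc.one_le]
        push_cast
        ring

lemma key_abstract {I : Type*} (Fq Fp : I → I → Prop)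
    (cov : ∀ a b, a ≠ b → Fq a b ∨ Fp a b)
    (symq : ∀ a b, a ≠ b → Fq a b → Fq b a)
    (tranq : ∀ a b c, a ≠ b → b ≠ c → a ≠ c → Fq a b → Fq b c → Fq a c)
    (symp : ∀ a b, a ≠ b → Fp a b → Fp b a)
    (tranp : ∀ a b c, a ≠ b → b ≠ c → a ≠ c → Fp a b → Fp b c → Fp a c)
    {i j : I} (hij : i ≠ j) (hFq : Fq i j) (hnFp : ¬ Fp i j) :
    ∀ k l, k ≠ l → Fq k l := by
  have stepA : ∀ m, m ≠ i → m ≠ j → Fq i m ∧ Fq j m := by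
    intro m hmi hmj
    by_cases h1 : Fq i m
    · exact ⟨h1, tranq j i m hij.symm (Ne.symm hmi) (Ne.symm hmj) (symq i j hij hFq) h1⟩
    · have hp1 : Fp i m := (cov i m (Ne.symm hmi)).resolve_left h1
      by_cases h2 : Fq j m
      · exact absurd (tranq i j m hij (Ne.symm hmj) (Ne.symm hmi) hFq h2) h1
      · have hp2 : Fp j m := (cov j m (Ne.symm hmj)).resolve_left h2
        exact absurd (tranp i m j (Ne.symm hmi) hmj hij hp1 (symp j m (Ne.symm hmj) hp2)) hnFp
  intro k l hkl
  by_cases hki : k = i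
  · by_cases hlj : l = j
    · rw [hki, hlj]; exact hFq
    · rw [hki]
      exact (stepA l (fun h => hkl (hki.trans h.symm)) hlj).1
  · by_cases hkj : k = j
    · by_cases hli : l = i
      · rw [hkj, hli]; exact symq i j hij hFq
      · rw [hkj]
        exact (stepA l hli (fun h => hkl (hkj.trans h.symm))).2
    · have hk := stepA k hki hkj
      by_cases hli : l = i
      · rw [hli]; exact symq i k (fun h => hki h.symm) hk.1
      · by_cases hlj : l = j
        · rw [hlj]; exact symq j k (fun h => hkj h.symm) hk.2
        · have hl := stepA l hli hlj
          exact tranq k i l hki (fun h => hli h.symm) hkl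
            (symq i k (fun h => hki h.symm) hk.1) hl.1

/-- For `p, q ≥ 5`, given admissible decompositions for all pairs of distinct indices,
one has `#(P_{ij} ∩ P_{kl}) ≥ p - 3` and `#(Q_{ij} ∩ Q_{kl}) ≥ q - 3`. -/
theorem card_P_inter_P_ge
    (p q : ℕ) (hp : p.Prime) (hq : q.Prime) (hpq : p ≠ q)
    (hp5 : 5 ≤ p) (hq5 : 5 ≤ q) [NeZero (p + q)]
    (M : Matrix (ZMod (p + q)) (ZMod (p + q)) (ZMod (p * q)))
    (P Q R : ZMod (p + q) → ZMod (p + q) → Finset (ZMod (p + q)))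
    (r : ZMod (p + q) → ZMod (p + q) → ZMod (p * q))
    (hadm : ∀ i j, i ≠ j →
      AdmissibleDecomp p q (fun t => M j t - M i t) (P i j) (Q i j) (R i j) (r i j)) :
    ∀ i j k l : ZMod (p + q), i ≠ j → k ≠ l →
      p - 3 ≤ (P i j ∩ P k l).card ∧ q - 3 ≤ (Q i j ∩ Q k l).card := by
  haveI : NeZero (p * q) := ⟨Nat.mul_ne_zero hp.ne_zero hq.ne_zero⟩
  haveI : NeZero q := ⟨hq.ne_zero⟩
  haveI : NeZero p := ⟨hp.ne_zero⟩
  haveI : Fact p.Prime := ⟨hp⟩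
  haveI : Fact q.Prime := ⟨hq⟩
  set φ := ZMod.castHom (dvd_mul_left q p) (ZMod q) with hφdef
  set ψ := ZMod.castHom (dvd_mul_right p q) (ZMod p) with hψdef
  have hq2 : q ≠ 2 := by omega
  have hp2 : p ≠ 2 := by omega
  -- per-pair facts mod q
  have Hq : ∀ a b, a ≠ b →
      (∀ t ∈ P a b, φ (M b t - M a t) = φ (r a b)) ∧
      (∀ t ∈ Q a b, φ (M b t - M a t) ≠ φ (r a b)) ∧
      (∀ t ∈ R a b, φ (M b t - M a t) = φ (r a b)) ∧
      (∑ t, φ (M b t - M a t) = (p : ZMod q) * φ (r a b)) := by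
    intro a b hab
    obtain ⟨h1, h2, h3, h4, h5, h6, h7, h8, h9, h10⟩ := hadm a b hab
    exact side_lemma hp hq hpq hq2 rfl (dvd_mul_left q p)
      (fun t => M b t - M a t) (P a b) (Q a b) (R a b) (r a b)
      h1 h2 h3 h4 h5 h6 h7 h8 h9 h10
  -- per-pair facts mod p
  have Hp : ∀ a b, a ≠ b →
      (∀ t ∈ Q a b, ψ (M b t - M a t) = ψ (r a b)) ∧
      (∀ t ∈ P a b, ψ (M b t - M a t) ≠ ψ (r a b)) ∧
      (∀ t ∈ R a b, ψ (M b t - M a t) = ψ (r a b)) ∧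
      (∑ t, ψ (M b t - M a t) = (q : ZMod p) * ψ (r a b)) := by
    intro a b hab
    obtain ⟨h1, h2, h3, h4, h5, h6, h7, h8, h9, h10⟩ := hadm a b hab
    have h4' : Q a b ∪ P a b ∪ R a b = Finset.univ := by
      rw [Finset.union_comm (Q a b) (P a b)]; exact h4
    exact side_lemma hq hp hpq.symm hp2 (mul_comm p q) (dvd_mul_right p q)
      (fun t => M b t - M a t) (Q a b) (P a b) (R a b) (r a b)
      h1.symm h3 h2 h4' h5 h6 h9 h10 h7 h8
  have hpq0 : (p : ZMod q) ≠ 0 := by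
    rw [Ne, ZMod.natCast_eq_zero_iff]
    intro h
    exact hpq ((Nat.prime_dvd_prime_iff_eq hq hp).mp h).symm
  have hqp0 : (q : ZMod p) ≠ 0 := by
    rw [Ne, ZMod.natCast_eq_zero_iff]
    intro h
    exact hpq ((Nat.prime_dvd_prime_iff_eq hp hq).mp h)
  -- additivity of the residues r mod q and mod p
  have Tq : ∀ a b c, a ≠ b → b ≠ c → a ≠ c → φ (r a b) + φ (r b c) = φ (r a c) := by
    intro a b c hab hbc hac
    have h1 := (Hq a b hab).2.2.2
    have h2 := (Hq b c hbc).2.2.2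
    have h3 := (Hq a c hac).2.2.2
    have h4 : (p : ZMod q) * φ (r a c) = (p : ZMod q) * (φ (r a b) + φ (r b c)) := by
      rw [mul_add, ← h1, ← h2, ← h3, ← Finset.sum_add_distrib]
      apply Finset.sum_congr rfl
      intro t _
      rw [← map_add]
      congr 1
      ring
    exact (mul_left_cancel₀ hpq0 h4).symm
  have Nq : ∀ a b, a ≠ b → φ (r b a) = - φ (r a b) := by
    intro a b hab
    have h1 := (Hq a b hab).2.2.2
    have h2 := (Hq b a hab.symm).2.2.2
    have h4 : (p : ZMod q) * φ (r b a) = (p : ZMod q) * (- φ (r a b)) := by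
      rw [← h2, mul_neg, ← h1, ← Finset.sum_neg_distrib]
      apply Finset.sum_congr rfl
      intro t _
      rw [← map_neg]
      congr 1
      ring
    exact mul_left_cancel₀ hpq0 h4
  have Tp : ∀ a b c, a ≠ b → b ≠ c → a ≠ c → ψ (r a b) + ψ (r b c) = ψ (r a c) := by
    intro a b c hab hbc hac
    have h1 := (Hp a b hab).2.2.2
    have h2 := (Hp b c hbc).2.2.2
    have h3 := (Hp a c hac).2.2.2
    have h4 : (q : ZMod p) * ψ (r a c) = (q : ZMod p) * (ψ (r a b) + ψ (r b c)) := by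
      rw [mul_add, ← h1, ← h2, ← h3, ← Finset.sum_add_distrib]
      apply Finset.sum_congr rfl
      intro t _
      rw [← map_add]
      congr 1
      ring
    exact (mul_left_cancel₀ hqp0 h4).symm
  have Np : ∀ a b, a ≠ b → ψ (r b a) = - ψ (r a b) := by
    intro a b hab
    have h1 := (Hp a b hab).2.2.2
    have h2 := (Hp b a hab.symm).2.2.2
    have h4 : (q : ZMod p) * ψ (r b a) = (q : ZMod p) * (- ψ (r a b)) := by
      rw [← h2, mul_neg, ← h1, ← Finset.sum_neg_distrib]
      apply Finset.sum_congr rfl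
      intro t _
      rw [← map_neg]
      congr 1
      ring
    exact mul_left_cancel₀ hqp0 h4
  have cover : ∀ a b, a ≠ b → ∀ t : ZMod (p + q),
      t ∈ P a b ∨ t ∈ Q a b ∨ t ∈ R a b := by
    intro a b hab t
    have h4 := (hadm a b hab).2.2.2.1
    have ht : t ∈ P a b ∪ Q a b ∪ R a b := by rw [h4]; exact Finset.mem_univ t
    simpa [Finset.mem_union, or_assoc] using ht
  -- key: membership in P i j forces the mod-q residue condition for all pairs
  have keyq : ∀ i j, i ≠ j → ∀ t ∈ P i j, ∀ k l, k ≠ l →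
      φ (M l t - M k t) = φ (r k l) := by
    intro i j hij t ht
    apply key_abstract (fun a b => φ (M b t - M a t) = φ (r a b))
      (fun a b => ψ (M b t - M a t) = ψ (r a b))
    · intro a b hab
      rcases cover a b hab t with h | h | h
      · exact Or.inl ((Hq a b hab).1 t h)
      · exact Or.inr ((Hp a b hab).1 t h)
      · exact Or.inl ((Hq a b hab).2.2.1 t h)
    · intro a b hab h
      rw [Nq a b hab, ← h, ← map_neg]
      congr 1
      ring
    · intro a b c hab hbc hac h1 h2
      rw [← Tq a b c hab hbc hac, ← h1, ← h2, ← map_add]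
      congr 1
      ring
    · intro a b hab h
      rw [Np a b hab, ← h, ← map_neg]
      congr 1
      ring
    · intro a b c hab hbc hac h1 h2
      rw [← Tp a b c hab hbc hac, ← h1, ← h2, ← map_add]
      congr 1
      ring
    · exact hij
    · exact (Hq i j hij).1 t ht
    · exact (Hp i j hij).2.1 t ht
  have keyp : ∀ i j, i ≠ j → ∀ t ∈ Q i j, ∀ k l, k ≠ l →
      ψ (M l t - M k t) = ψ (r k l) := by
    intro i j hij t ht
    apply key_abstract (fun a b => ψ (M b t - M a t) = ψ (r a b))
      (fun a b => φ (M b t - M a t) = φ (r a b))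
    · intro a b hab
      rcases cover a b hab t with h | h | h
      · exact Or.inr ((Hq a b hab).1 t h)
      · exact Or.inl ((Hp a b hab).1 t h)
      · exact Or.inl ((Hp a b hab).2.2.1 t h)
    · intro a b hab h
      rw [Np a b hab, ← h, ← map_neg]
      congr 1
      ring
    · intro a b c hab hbc hac h1 h2
      rw [← Tp a b c hab hbc hac, ← h1, ← h2, ← map_add]
      congr 1
      ring
    · intro a b hab h
      rw [Nq a b hab, ← h, ← map_neg]
      congr 1
      ring
    · intro a b c hab hbc hac h1 h2
      rw [← Tq a b c hab hbc hac, ← h1, ← h2, ← map_add]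
      congr 1
      ring
    · exact hij
    · exact (Hp i j hij).1 t ht
    · exact (Hq i j hij).2.1 t ht
  intro i j k l hij hkl
  constructor
  · -- P side
    have hsub : P i j ⊆ (P i j ∩ P k l) ∪ R k l := by
      intro t ht
      have hf := keyq i j hij t ht k l hkl
      rcases cover k l hkl t with h | h | h
      · exact Finset.mem_union_left _ (Finset.mem_inter.mpr ⟨ht, h⟩)
      · exact absurd hf ((Hq k l hkl).2.1 t h)
      · exact Finset.mem_union_right _ h
    have hcard := Finset.card_le_card hsub
    have h1 : ((P i j ∩ P k l) ∪ R k l).card ≤ (P i j ∩ P k l).card + (R k l).card :=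
      Finset.card_union_le _ _
    have h2 : (P i j).card = p - 1 := (hadm i j hij).2.2.2.2.2.2.1
    have h3 : (R k l).card = 2 := (hadm k l hkl).2.2.2.2.1
    omega
  · -- Q side
    have hsub : Q i j ⊆ (Q i j ∩ Q k l) ∪ R k l := by
      intro t ht
      have hf := keyp i j hij t ht k l hkl
      rcases cover k l hkl t with h | h | h
      · exact absurd hf ((Hp k l hkl).2.1 t h)
      · exact Finset.mem_union_left _ (Finset.mem_inter.mpr ⟨ht, h⟩)
      · exact Finset.mem_union_right _ h
    have hcard := Finset.card_le_card hsub
    have h1 : ((Q i j ∩ Q k l) ∪ R k l).card ≤ (Q i j ∩ Q k l).card + (R k l).card :=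
      Finset.card_union_le _ _
    have h2 : (Q i j).card = q - 1 := (hadm i j hij).2.2.2.2.2.2.2.2.1
    have h3 : (R k l).card = 2 := (hadm k l hkl).2.2.2.2.1
    omega
end
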